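/- arXiv:1910.07473 — 6 statements merged into one kernel-verified Lean document; each statement's English description precedes it below -/
import Mathlib

section
/- Let N be a positive integer and K ⊂ ℂ compact. Suppose that for every i ∈ {0, 1, …, N−1} there exist γ_i ∈ ℂ with |γ_i| = 1 and a continuous matrix-valued map 𝒳_i on K such that: X_{nN+i}(z) → 𝒳_i(z) uniformly on K; a_{nN+i−1}/|a_{nN+i−1}| → γ_i; a_{nN+i−1}/a_{(n+1)N+i−1} → 1; for every z ∈ K the matrix 𝒳_i(z) has real entries, is invertible, and discr 𝒳_i(z) < 0; and (X_{nN+i} : n ≥ 1) ∈ D̃₁(K, GL(2, ℂ)). If ∑_{n≥0} 1/|a_n| < ∞, then for every z ∈ K every generalised eigenvector u associated with z satisfies ∑_{n≥0} |u_n|² < ∞ (i.e. u is square-summable). -/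
open Filter Matrix Topology

noncomputable section

/-- The operator norm of a 2×2 complex matrix (as operator on Euclidean ℂ²). -/
noncomputable def opNorm (X : Matrix (Fin 2) (Fin 2) ℂ) : ℝ :=
  ‖Matrix.toEuclideanCLM (𝕜 := ℂ) X‖

/-- Entrywise complex conjugation of a matrix. -/
def mconj (X : Matrix (Fin 2) (Fin 2) ℂ) : Matrix (Fin 2) (Fin 2) ℂ :=
  X.map (starRingEnd ℂ)

/-- Hermitian symmetrisation. -/
def symQ (X : Matrix (Fin 2) (Fin 2) ℂ) : Matrix (Fin 2) (Fin 2) ℂ :=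
  (2⁻¹ : ℂ) • (X + Xᴴ)

def Ematrix : Matrix (Fin 2) (Fin 2) ℂ := !![0, -1; 1, 0]

/-- One-step transfer matrix `B_j(z)`. -/
def Bmat (a b : ℕ → ℂ) (j : ℕ) (z : ℂ) : Matrix (Fin 2) (Fin 2) ℂ :=
  !![0, 1; -(a (j-1) / a j), (z - b j) / a j]

/-- `N`-step transfer matrix `X_n(z) = B_{n+N-1}(z) ⋯ B_n(z)`. -/
def transfer (a b : ℕ → ℂ) (N n : ℕ) (z : ℂ) : Matrix (Fin 2) (Fin 2) ℂ :=
  (((List.range N).map fun j => Bmat a b (n + j) z).reverse).prod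

/-- Generalised eigenvector associated with `z`. -/
def IsGenEigen (a b : ℕ → ℂ) (z : ℂ) (u : ℕ → ℂ) : Prop :=
  ¬(u 0 = 0 ∧ u 1 = 0) ∧
    ∀ n, 1 ≤ n → z * u n = a n * u (n+1) + b n * u n + a (n-1) * u (n-1)

/-- The twisted Stolz class `D̃₁(K, GL(2,ℂ))`. -/
def MemD1K (K : Set ℂ) (Y : ℕ → ℂ → Matrix (Fin 2) (Fin 2) ℂ) : Prop :=
  (∀ n, 1 ≤ n → ContinuousOn (Y n) K) ∧
  (∀ n, 1 ≤ n → ∀ z ∈ K, IsUnit (Y n z)) ∧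
  (∃ C : ℝ, ∀ n, 1 ≤ n → ∀ z ∈ K, opNorm (Y n z) ≤ C) ∧
  (∃ g : ℕ → ℝ, Summable g ∧ ∀ n, 1 ≤ n → ∀ z ∈ K,
      opNorm (Y (n+1) z - mconj (Y n z)) ≤ g n)

/-- The twisted Stolz class `D̃₁(ℂ)` for scalar sequences `(x_n : n ≥ 1)`. -/
def MemD1 (x : ℕ → ℂ) : Prop :=
  (∃ C : ℝ, ∀ n, 1 ≤ n → ‖x n‖ ≤ C) ∧
    Summable (fun n : ℕ => ‖x (n+2) - (starRingEnd ℂ) (x (n+1))‖)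

def MemD1N (N : ℕ) (x : ℕ → ℂ) : Prop := ∀ i < N, MemD1 (fun n => x (n*N+i))

/-- The quadratic form `v ↦ ⟨M v, v⟩`. -/
def Qform (M : Matrix (Fin 2) (Fin 2) ℂ) (v : Fin 2 → ℂ) : ℂ :=
  dotProduct (star v) (M.mulVec v)

def Qgam (a b : ℕ → ℂ) (N : ℕ) (γ : ℂ) (n : ℕ) (z : ℂ) (v : Fin 2 → ℂ) : ℂ :=
  Qform (symQ ((a (n+N-1) / (γ * (‖a (n+N-1)‖ : ℂ))) • (Ematrix * transfer a b N n z))) v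

def Qtil (a b : ℕ → ℂ) (N : ℕ) (γ : ℂ) (n : ℕ) (z : ℂ) (v : Fin 2 → ℂ) : ℂ :=
  Qform (symQ ((a (n+N-1) / (γ * (‖a (n+N-1)‖ : ℂ)) *
      (starRingEnd ℂ) (a (n+N-1) / a (n-1))) • (Ematrix * mconj (transfer a b N n z)))) v

/-- The `N`-shifted Turán determinant, expressed via a generalised eigenvector `u`. -/
def Sdet (a b : ℕ → ℂ) (N : ℕ) (γ : ℂ) (z : ℂ) (u : ℕ → ℂ) (n : ℕ) : ℂ :=
  (‖a (n+N-1)‖ : ℂ) * Qgam a b N γ n z ![u (n-1), u n]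

/-- Uniform non-degeneracy of a family of quadratic forms. -/
def UnifNonDeg (K : Set ℂ) (Q : ℕ → ℂ → (Fin 2 → ℂ) → ℂ) : Prop :=
  ∃ c₁ > (0:ℝ), ∃ c₂ > (0:ℝ), ∃ M : ℕ, 1 ≤ M ∧
    ∀ v : Fin 2 → ℂ, ∀ z ∈ K, ∀ n, M ≤ n →
      c₁ * (‖v 0‖^2 + ‖v 1‖^2) ≤ ‖Q n z v‖ ∧ ‖Q n z v‖ ≤ c₂ * (‖v 0‖^2 + ‖v 1‖^2)

def RealEntries (X : Matrix (Fin 2) (Fin 2) ℂ) : Prop := ∀ p q, (X p q).im = 0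

def discr (X : Matrix (Fin 2) (Fin 2) ℂ) : ℂ := (Matrix.trace X)^2 - 4 * X.det

/-- Periodic one-step matrix `𝔅_j(x)` (real). -/
def pB (α β : ℤ → ℝ) (j : ℤ) (x : ℝ) : Matrix (Fin 2) (Fin 2) ℝ :=
  !![0, 1; -(α (j-1) / α j), (x - β j) / α j]

/-- Periodic transfer matrix `𝔛_i(x) = 𝔅_{i+N-1}(x) ⋯ 𝔅_i(x)`. -/
def pX (α β : ℤ → ℝ) (N : ℕ) (i : ℤ) (x : ℝ) : Matrix (Fin 2) (Fin 2) ℝ :=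
  (((List.range N).map fun j => pB α β (i + j) x).reverse).prod

/-- The generalised eigenvector with initial data `α`. -/
def gev (a b : ℕ → ℂ) (z : ℂ) (α : Fin 2 → ℂ) : ℕ → ℂ
  | 0 => α 0
  | 1 => α 1
  | n+2 => ((z - b (n+1)) * gev a b z α (n+1) - a n * gev a b z α n) / a (n+1)

end

/-!
Fix a residue class `i` mod `N` and put `X m = X_{mN+i}(z)`, `w m = (u_{mN+i-1}, u_{mN+i})` and
`α m = a_{mN+i-1}`, so that `w (m+1) = X m w m` and `α (m+1) det (X m) = α m`. The identity
`Xᴴ E X̄ = (det X)‾ E` shows that the Turán-type quantity `|α m| |⟨E X m w m, w m⟩|` changes from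
`m` to `m + 1` only through the defect `X (m+1) - X̄ m`, which is summable; so it stays bounded.
Since `X m → 𝒳` with `𝒳` real and `discr 𝒳 < 0`, the Hermitian part of `E 𝒳` is definite, so
this quantity dominates `|α m| ‖w m‖²`. Hence `|u_{mN+i}|² ≲ 1 / |a_{mN+i-1}|`, which is summable.
-/

open Filter Matrix Topology ComplexConjugate

section QuadraticForm

lemma norm_qform_le (M : Matrix (Fin 2) (Fin 2) ℂ) (v : Fin 2 → ℂ) :
    ‖Qform M v‖ ≤ opNorm M * ‖WithLp.toLp 2 v‖ ^ 2 := by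
  set x : EuclideanSpace ℂ (Fin 2) := WithLp.toLp 2 v
  have hinner : Qform M v = inner ℂ x (Matrix.toEuclideanCLM (𝕜 := ℂ) M x) := by
    rw [toEuclideanCLM_toLp, EuclideanSpace.inner_toLp_toLp, Qform, dotProduct_comm]
  calc ‖Qform M v‖ ≤ ‖x‖ * ‖Matrix.toEuclideanCLM (𝕜 := ℂ) M x‖ := by
        rw [hinner]; exact norm_inner_le_norm _ _
    _ ≤ ‖x‖ * (opNorm M * ‖x‖) := by gcongr; exact ContinuousLinearMap.le_opNorm _ _
    _ = opNorm M * ‖x‖ ^ 2 := by ring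

lemma qform_sub (A B : Matrix (Fin 2) (Fin 2) ℂ) (v : Fin 2 → ℂ) :
    Qform (A - B) v = Qform A v - Qform B v := by
  rw [Qform, Qform, Qform, sub_mulVec, dotProduct_sub]

lemma toEuclideanCLM_Ematrix_mem_unitary : Matrix.toEuclideanCLM (𝕜 := ℂ) Ematrix ∈
    unitary (EuclideanSpace ℂ (Fin 2) →L[ℂ] EuclideanSpace ℂ (Fin 2)) := by
  refine Unitary.map_mem _ (Unitary.mem_iff.2 ⟨?_, ?_⟩) <;>
    ext i j <;> fin_cases i <;> fin_cases j <;> simp [Ematrix, Matrix.mul_apply]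

lemma opNorm_Ematrix_mul (Y : Matrix (Fin 2) (Fin 2) ℂ) : opNorm (Ematrix * Y) = opNorm Y := by
  rw [opNorm, opNorm, map_mul]
  exact CStarRing.norm_mem_unitary_mul _ toEuclideanCLM_Ematrix_mem_unitary

lemma conjTranspose_mul_Ematrix_mul_mconj (X : Matrix (Fin 2) (Fin 2) ℂ) :
    Xᴴ * (Ematrix * mconj X) = conj X.det • Ematrix := by
  ext p q
  fin_cases p <;> fin_cases q <;>
    simp [Matrix.mul_apply, Fin.sum_univ_two, Ematrix, mconj, Matrix.vecMul, dotProduct,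
      Matrix.det_fin_two] <;> ring

lemma qform_Ematrix_mul_mulVec (X Y : Matrix (Fin 2) (Fin 2) ℂ) (w : Fin 2 → ℂ) :
    Qform (Ematrix * Y) (X *ᵥ w) =
      conj X.det * Qform (Ematrix * X) w + Qform (Ematrix * (Y - mconj X)) (X *ᵥ w) := by
  have hsplit : Ematrix * Y = Ematrix * mconj X + Ematrix * (Y - mconj X) := by
    rw [← Matrix.mul_add, add_sub_cancel]
  rw [hsplit, Qform, Qform, Qform, Matrix.add_mulVec, dotProduct_add]
  congr 1
  rw [Matrix.star_mulVec, ← dotProduct_mulVec, Matrix.mulVec_mulVec, Matrix.mulVec_mulVec,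
    conjTranspose_mul_Ematrix_mul_mconj, Matrix.smul_mul, Matrix.smul_mulVec, dotProduct_smul,
    smul_eq_mul]

end QuadraticForm

section Definiteness

/-- Both `α Q` and `δ Q` dominate `(α δ - β²)` times a square, whatever the signs of `α, δ`. -/
lemma real_quadratic_lower_bound {α β δ x y t : ℝ} (ht : |t| ≤ x * y) :
    (α * δ - β ^ 2) * (x ^ 2 + y ^ 2) ≤ (|α| + |δ|) * |α * x ^ 2 + 2 * β * t + δ * y ^ 2| := by
  set Q := α * x ^ 2 + 2 * β * t + δ * y ^ 2
  have hcross : ∀ κ : ℝ, -(|κ * β| * (x * y)) ≤ κ * β * t := fun κ => by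
    have := abs_le.mp ((abs_mul (κ * β) t).trans_le (mul_le_mul_of_nonneg_left ht (abs_nonneg _)))
    linarith [this.1]
  have hα : (α * δ - β ^ 2) * y ^ 2 ≤ α * Q := by
    have hsq : (|α| * x - |β| * y) ^ 2 =
        α ^ 2 * x ^ 2 - 2 * (|α * β| * (x * y)) + β ^ 2 * y ^ 2 := by
      rw [abs_mul]; nlinarith [sq_abs α, sq_abs β]
    nlinarith [hcross α, sq_nonneg (|α| * x - |β| * y)]
  have hδ : (α * δ - β ^ 2) * x ^ 2 ≤ δ * Q := by
    have hsq : (|δ| * y - |β| * x) ^ 2 =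
        δ ^ 2 * y ^ 2 - 2 * (|δ * β| * (x * y)) + β ^ 2 * x ^ 2 := by
      rw [abs_mul]; nlinarith [sq_abs δ, sq_abs β]
    nlinarith [hcross δ, sq_nonneg (|δ| * y - |β| * x)]
  have hαQ : α * Q ≤ |α| * |Q| := (le_abs_self _).trans (abs_mul α Q).le
  have hδQ : δ * Q ≤ |δ| * |Q| := (le_abs_self _).trans (abs_mul δ Q).le
  nlinarith

lemma norm_toLp_sq (v : Fin 2 → ℂ) : ‖WithLp.toLp 2 v‖ ^ 2 = ‖v 0‖ ^ 2 + ‖v 1‖ ^ 2 := by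
  rw [EuclideanSpace.norm_sq_eq]
  simp [Fin.sum_univ_two]

lemma re_qform_Ematrix_mul_of_real (p q r s : ℝ) (v : Fin 2 → ℂ) :
    (Qform (Ematrix * !![(p : ℂ), q; r, s]) v).re =
      -r * ‖v 0‖ ^ 2 + 2 * ((p - s) / 2) * (conj (v 0) * v 1).re + q * ‖v 1‖ ^ 2 := by
  simp [Qform, Ematrix, Matrix.mul_apply, mulVec, dotProduct, Fin.sum_univ_two, Complex.mul_re,
    Complex.sq_norm, Complex.normSq_apply]
  ring

/-- For real `𝒳` the Hermitian part of `E 𝒳` has determinant `-discr 𝒳 / 4`, hence is definite. -/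
lemma exists_lower_bound_qform_Ematrix_mul (𝒳 : Matrix (Fin 2) (Fin 2) ℂ) (hreal : RealEntries 𝒳)
    (hdiscr : (_root_.discr 𝒳).re < 0) :
    ∃ c > 0, ∀ v : Fin 2 → ℂ, c * ‖WithLp.toLp 2 v‖ ^ 2 ≤ ‖Qform (Ematrix * 𝒳) v‖ := by
  set p := (𝒳 0 0).re; set q := (𝒳 0 1).re; set r := (𝒳 1 0).re; set s := (𝒳 1 1).re
  have h𝒳 : 𝒳 = !![(p : ℂ), q; r, s] := by
    ext i j
    fin_cases i <;> fin_cases j <;> exact Complex.ext (by simp [p, q, r, s]) (by simp [hreal _ _])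
  have hdiscr' : (_root_.discr 𝒳).re = (p - s) ^ 2 + 4 * q * r := by
    have h : ((p : ℂ) + s) ^ 2 - 4 * (p * s - q * r) = ((p - s) ^ 2 + 4 * q * r : ℝ) := by
      push_cast; ring
    rw [h𝒳, _root_.discr, trace_fin_two_of, det_fin_two_of, h, Complex.ofReal_re]
  have hdef : ((p - s) / 2) ^ 2 < -r * q := by nlinarith
  have hpos : 0 < |-r| + |q| := by
    have : -r ≠ 0 := fun h0 => by
      rw [h0, zero_mul] at hdef
      exact (sq_nonneg _).not_gt hdef
    positivity
  refine ⟨(-r * q - ((p - s) / 2) ^ 2) / (|-r| + |q|), div_pos (by linarith) hpos, fun v => ?_⟩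
  have hcross : |(conj (v 0) * v 1).re| ≤ ‖v 0‖ * ‖v 1‖ := by
    simpa using Complex.abs_re_le_norm (conj (v 0) * v 1)
  rw [div_mul_eq_mul_div, div_le_iff₀' hpos, norm_toLp_sq]
  calc _ ≤ (|-r| + |q|) * |(Qform (Ematrix * 𝒳) v).re| := by
        rw [h𝒳, re_qform_Ematrix_mul_of_real]
        exact real_quadratic_lower_bound hcross
    _ ≤ _ := by gcongr; exact Complex.abs_re_le_norm _

lemma eventually_lower_bound_qform_Ematrix_mul {X : ℕ → Matrix (Fin 2) (Fin 2) ℂ}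
    {𝒳 : Matrix (Fin 2) (Fin 2) ℂ} (hX : Tendsto (fun m => opNorm (X m - 𝒳)) atTop (𝓝 0))
    {c : ℝ} (hc : 0 < c)
    (hlow : ∀ v : Fin 2 → ℂ, c * ‖WithLp.toLp 2 v‖ ^ 2 ≤ ‖Qform (Ematrix * 𝒳) v‖) :
    ∀ᶠ m in atTop, ∀ v : Fin 2 → ℂ,
      c / 2 * ‖WithLp.toLp 2 v‖ ^ 2 ≤ ‖Qform (Ematrix * X m) v‖ := by
  filter_upwards [hX.eventually (gt_mem_nhds (half_pos hc))] with m hm v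
  have hdiff :
      ‖Qform (Ematrix * 𝒳) v - Qform (Ematrix * X m) v‖ ≤ c / 2 * ‖WithLp.toLp 2 v‖ ^ 2 :=
    calc _ = ‖Qform (Ematrix * (𝒳 - X m)) v‖ := by rw [Matrix.mul_sub, qform_sub]
      _ ≤ opNorm (𝒳 - X m) * ‖WithLp.toLp 2 v‖ ^ 2 := by
        rw [← opNorm_Ematrix_mul]; exact norm_qform_le _ _
      _ = opNorm (X m - 𝒳) * ‖WithLp.toLp 2 v‖ ^ 2 := by
        rw [opNorm, opNorm, map_sub, map_sub, norm_sub_rev]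
      _ ≤ _ := by gcongr
  linarith [hlow v, norm_sub_norm_le (Qform (Ematrix * 𝒳) v) (Qform (Ematrix * X m) v)]

end Definiteness

section TuranBound

lemma exists_eventually_le_of_le_mul_one_add {G h : ℕ → ℝ} (hG : ∀ m, 0 ≤ G m)
    (hh : ∀ m, 0 ≤ h m) (hsum : Summable h) (hrec : ∀ᶠ m in atTop, G (m + 1) ≤ G m * (1 + h m)) :
    ∃ D, ∀ᶠ m in atTop, G m ≤ D := by
  obtain ⟨M, hM⟩ := eventually_atTop.1 hrec
  have hexp : ∀ m, M ≤ m → G m ≤ G M * Real.exp (∑ k ∈ Finset.Ico M m, h k) := by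
    intro m hm
    induction m, hm using Nat.le_induction with
    | base => simp
    | succ m hm ih =>
      calc G (m + 1) ≤ G m * (1 + h m) := hM m hm
        _ ≤ G M * Real.exp (∑ k ∈ Finset.Ico M m, h k) * Real.exp (h m) :=
          mul_le_mul ih (by linarith [Real.add_one_le_exp (h m)]) (by linarith [hh m])
            (mul_nonneg (hG M) (Real.exp_nonneg _))
        _ = G M * Real.exp (∑ k ∈ Finset.Ico M (m + 1), h k) := by
          rw [Finset.sum_Ico_succ_top hm, mul_assoc, ← Real.exp_add]
  refine ⟨G M * Real.exp (∑' k, h k), eventually_atTop.2 ⟨M, fun m hm => (hexp m hm).trans ?_⟩⟩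
  gcongr
  · exact hG M
  · exact hsum.sum_le_tsum _ fun k _ => hh k

theorem exists_bound_norm_mul_sq_of_summable_variation {X : ℕ → Matrix (Fin 2) (Fin 2) ℂ}
    {w : ℕ → Fin 2 → ℂ} {α : ℕ → ℂ} {c : ℝ} (hc : 0 < c) {g : ℕ → ℝ} (hg : Summable g)
    (hw : ∀ᶠ m in atTop, w (m + 1) = X m *ᵥ w m)
    (hdet : ∀ᶠ m in atTop, α (m + 1) * (X m).det = α m)
    (hlow : ∀ᶠ m in atTop, ∀ v : Fin 2 → ℂ,
      c * ‖WithLp.toLp 2 v‖ ^ 2 ≤ ‖Qform (Ematrix * X m) v‖)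
    (hvar : ∀ᶠ m in atTop, opNorm (X (m + 1) - mconj (X m)) ≤ g m) :
    ∃ D, ∀ᶠ m in atTop, ‖α m‖ * ‖WithLp.toLp 2 (w m)‖ ^ 2 ≤ D := by
  set G : ℕ → ℝ := fun m => ‖α m‖ * ‖Qform (Ematrix * X m) (w m)‖
  have hGlow : ∀ᶠ m in atTop, c * (‖α m‖ * ‖WithLp.toLp 2 (w m)‖ ^ 2) ≤ G m := by
    filter_upwards [hlow] with m hm
    rw [mul_left_comm]
    exact mul_le_mul_of_nonneg_left (hm _) (norm_nonneg _)
  have hstep : ∀ᶠ m in atTop,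
      G (m + 1) ≤ G m + |g m| * (‖α (m + 1)‖ * ‖WithLp.toLp 2 (w (m + 1))‖ ^ 2) := by
    filter_upwards [hw, hdet, hvar] with m hwm hdetm hvarm
    have hrec : conj (α (m + 1)) * Qform (Ematrix * X (m + 1)) (w (m + 1)) =
        conj (α m) * Qform (Ematrix * X m) (w m) +
          conj (α (m + 1)) * Qform (Ematrix * (X (m + 1) - mconj (X m))) (w (m + 1)) := by
      rw [hwm, qform_Ematrix_mul_mulVec, ← hdetm, map_mul]
      ring
    set R := Qform (Ematrix * (X (m + 1) - mconj (X m))) (w (m + 1))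
    have hR : ‖R‖ ≤ |g m| * ‖WithLp.toLp 2 (w (m + 1))‖ ^ 2 := by
      have := norm_qform_le (Ematrix * (X (m + 1) - mconj (X m))) (w (m + 1))
      rw [opNorm_Ematrix_mul] at this
      exact this.trans (by gcongr; exact hvarm.trans (le_abs_self _))
    calc G (m + 1) = ‖conj (α (m + 1)) * Qform (Ematrix * X (m + 1)) (w (m + 1))‖ := by
          simp [G]
      _ ≤ ‖conj (α m) * Qform (Ematrix * X m) (w m)‖ + ‖conj (α (m + 1)) * R‖ := by
          rw [hrec]; exact norm_add_le _ _
      _ = G m + ‖α (m + 1)‖ * ‖R‖ := by simp [G]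
      _ ≤ G m + ‖α (m + 1)‖ * (|g m| * ‖WithLp.toLp 2 (w (m + 1))‖ ^ 2) := by gcongr
      _ = _ := by ring
  have hrec : ∀ᶠ m in atTop, G (m + 1) ≤ G m * (1 + 2 / c * |g m|) := by
    have hsmall := hg.abs.tendsto_atTop_zero.eventually (gt_mem_nhds (half_pos hc))
    filter_upwards [hstep, (tendsto_add_atTop_nat 1).eventually hGlow, hsmall]
      with m hstepm hlowm hsmallm
    set e := |g m| / c
    have he : 0 ≤ e ∧ e ≤ 1 / 2 := ⟨by positivity, by rw [div_le_iff₀ hc]; linarith⟩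
    have hG1 : G (m + 1) ≤ G m + e * G (m + 1) := by
      calc G (m + 1) ≤ G m + |g m| * (‖α (m + 1)‖ * ‖WithLp.toLp 2 (w (m + 1))‖ ^ 2) := hstepm
        _ ≤ G m + |g m| * (G (m + 1) / c) := by gcongr; rw [le_div_iff₀' hc]; exact hlowm
        _ = G m + e * G (m + 1) := by ring
    have hG0 : 0 ≤ G (m + 1) := by positivity
    have : 2 / c * |g m| = 2 * e := by ring
    rw [this]
    nlinarith [mul_nonneg (mul_nonneg he.1 (by linarith [he.2] : 0 ≤ 1 - 2 * e)) hG0]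
  obtain ⟨D, hD⟩ := exists_eventually_le_of_le_mul_one_add (G := G) (fun m => by positivity)
    (fun m => by positivity) (hg.abs.mul_left (2 / c)) hrec
  refine ⟨D / c, ?_⟩
  filter_upwards [hGlow, hD] with m hlowm hDm
  rw [le_div_iff₀' hc]
  exact hlowm.trans hDm

end TuranBound

section Transfer

variable (a b : ℕ → ℂ) (z : ℂ)

lemma transfer_succ (N n : ℕ) :
    transfer a b (N + 1) n z = Bmat a b (n + N) z * transfer a b N n z := by
  simp [transfer, List.range_succ]

variable {a} in
lemma det_transfer (ha : ∀ n, a n ≠ 0) (N n : ℕ) :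
    (transfer a b N n z).det = a (n - 1) / a (n + N - 1) := by
  induction N with
  | zero => simp [transfer, div_self (ha (n - 1))]
  | succ N ih =>
    rw [transfer_succ, Matrix.det_mul, ih, show n + (N + 1) - 1 = n + N by omega]
    simp only [Bmat, Matrix.det_fin_two_of]
    field_simp [ha]
    ring

variable {a b z} {u : ℕ → ℂ}

lemma Bmat_mulVec (ha : ∀ n, a n ≠ 0)
    (hu : ∀ n, 1 ≤ n → z * u n = a n * u (n + 1) + b n * u n + a (n - 1) * u (n - 1))
    {n : ℕ} (hn : 1 ≤ n) : Bmat a b n z *ᵥ ![u (n - 1), u n] = ![u n, u (n + 1)] := by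
  ext p
  fin_cases p
  · simp [Bmat, mulVec, dotProduct]
  · simp only [mulVec, dotProduct, Bmat, Fin.mk_one, of_apply, cons_val', cons_val_fin_one,
      cons_val_zero, cons_val_one, Fin.sum_univ_two]
    field_simp [ha n]
    linear_combination hu n hn

lemma transfer_mulVec (ha : ∀ n, a n ≠ 0)
    (hu : ∀ n, 1 ≤ n → z * u n = a n * u (n + 1) + b n * u n + a (n - 1) * u (n - 1))
    (N : ℕ) {n : ℕ} (hn : 1 ≤ n) :
    transfer a b N n z *ᵥ ![u (n - 1), u n] = ![u (n + N - 1), u (n + N)] := by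
  induction N with
  | zero => simp [transfer]
  | succ N ih =>
    rw [transfer_succ, ← Matrix.mulVec_mulVec, ih, Bmat_mulVec ha hu (by omega),
      show n + (N + 1) - 1 = n + N by omega, ← add_assoc]

end Transfer

lemma summable_of_summable_comp_mul_add {f : ℕ → ℝ} (hf : 0 ≤ f) {N : ℕ} (hN : 1 ≤ N)
    (h : ∀ i < N, Summable fun m => f (m * N + i)) : Summable f := by
  have : NeZero N := ⟨by omega⟩
  rw [← (Nat.divModEquiv N).symm.summable_iff]
  refine (summable_prod_of_nonneg fun _ => hf _).2 ⟨fun _ => .of_finite, ?_⟩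
  simp only [tsum_fintype]
  exact summable_sum fun i _ => h i i.2

lemma summable_inv_norm_comp_mul_add {a : ℕ → ℂ} (hsum : Summable fun n => 1 / ‖a n‖) {N : ℕ}
    (hN : 1 ≤ N) (i : ℕ) : Summable fun m => 1 / ‖a (m * N + i - 1)‖ := by
  have hmono : StrictMono fun m => (m + 1) * N + i - 1 :=
    strictMono_nat_of_lt_succ fun m => by
      have : (m + 1) * N + N = (m + 1 + 1) * N := by ring
      have : N ≤ (m + 1) * N := Nat.le_mul_of_pos_left N m.succ_pos
      omega
  exact (summable_nat_add_iff 1).1 (hsum.comp_injective hmono.injective)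

theorem summable_sq_norm_comp_mul_add {a b : ℕ → ℂ} (ha : ∀ n, a n ≠ 0)
    (hsum : Summable fun n => 1 / ‖a n‖) {z : ℂ} {u : ℕ → ℂ}
    (hu : ∀ n, 1 ≤ n → z * u n = a n * u (n + 1) + b n * u n + a (n - 1) * u (n - 1))
    {N i : ℕ} (hN : 1 ≤ N) {𝒳 : Matrix (Fin 2) (Fin 2) ℂ}
    (hconv : Tendsto (fun m => opNorm (transfer a b N (m * N + i) z - 𝒳)) atTop (𝓝 0))
    (hreal : RealEntries 𝒳) (hdiscr : (_root_.discr 𝒳).re < 0) {g : ℕ → ℝ} (hg : Summable g)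
    (hvar : ∀ m, 1 ≤ m →
      opNorm (transfer a b N ((m + 1) * N + i) z - mconj (transfer a b N (m * N + i) z)) ≤ g m) :
    Summable fun m => ‖u (m * N + i)‖ ^ 2 := by
  have hshift : ∀ m, (m + 1) * N + i = m * N + i + N := fun m => by ring
  have hpos : ∀ᶠ m in atTop, 1 ≤ m * N + i := eventually_atTop.2 ⟨1, fun m hm => by nlinarith⟩
  obtain ⟨c, hc, hlow⟩ := exists_lower_bound_qform_Ematrix_mul 𝒳 hreal hdiscr
  obtain ⟨D, hD⟩ := exists_bound_norm_mul_sq_of_summable_variation (half_pos hc) hg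
    (X := fun m => transfer a b N (m * N + i) z)
    (w := fun m => ![u (m * N + i - 1), u (m * N + i)])
    (α := fun m => a (m * N + i - 1))
    (hpos.mono fun m hm => by simp only [hshift, transfer_mulVec ha hu N hm])
    (Eventually.of_forall fun m => by
      simp only [hshift, det_transfer b z ha]
      exact mul_div_cancel₀ _ (ha _))
    (eventually_lower_bound_qform_Ematrix_mul hconv hc hlow)
    (eventually_atTop.2 ⟨1, hvar⟩)
  refine .of_norm_bounded_eventually_nat
    ((summable_inv_norm_comp_mul_add hsum hN i).mul_left D) ?_
  filter_upwards [hD] with m hm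
  have hna : 0 < ‖a (m * N + i - 1)‖ := norm_pos_iff.2 (ha _)
  have hu_le :
      ‖u (m * N + i)‖ ^ 2 ≤ ‖WithLp.toLp 2 ![u (m * N + i - 1), u (m * N + i)]‖ ^ 2 := by
    rw [norm_toLp_sq]; simp
  rw [norm_pow, norm_norm, mul_one_div, le_div_iff₀' hna]
  exact (mul_le_mul_of_nonneg_left hu_le hna.le).trans hm

open Filter Matrix Topology in
theorem statement2_general
    (a b : ℕ → ℂ) (ha : ∀ n, a n ≠ 0)
    (N : ℕ) (hN : 1 ≤ N)
    (K : Set ℂ)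
    (hyp : ∀ i < N, ∃ γ : ℂ, ‖γ‖ = 1 ∧ ∃ 𝒳 : ℂ → Matrix (Fin 2) (Fin 2) ℂ,
      ContinuousOn 𝒳 K ∧
      (∀ ε > (0:ℝ), ∃ M : ℕ, ∀ n, M ≤ n → ∀ z ∈ K,
        opNorm (transfer a b N (n*N+i) z - 𝒳 z) < ε) ∧
      Tendsto (fun n : ℕ => a (n*N+i-1) / (‖a (n*N+i-1)‖ : ℂ)) atTop (𝓝 γ) ∧
      Tendsto (fun n : ℕ => a (n*N+i-1) / a ((n+1)*N+i-1)) atTop (𝓝 1) ∧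
      (∀ z ∈ K, RealEntries (𝒳 z) ∧ IsUnit (𝒳 z) ∧ (_root_.discr (𝒳 z)).re < 0) ∧
      MemD1K K (fun n z => transfer a b N (n*N+i) z))
    (hsum : Summable (fun n : ℕ => 1 / ‖a n‖)) :
    ∀ z ∈ K, ∀ u : ℕ → ℂ, IsGenEigen a b z u → Summable (fun n : ℕ => ‖u n‖^2) := by
  intro z hz u hu
  refine summable_of_summable_comp_mul_add (fun _ => sq_nonneg _) hN fun i hi => ?_
  obtain ⟨-, -, 𝒳, -, hconv, -, -, h𝒳, -, -, -, ⟨g, hg, hvar⟩⟩ := hyp i hi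
  obtain ⟨hreal, -, hdiscr⟩ := h𝒳 z hz
  refine summable_sq_norm_comp_mul_add ha hsum hu.2 hN ?_ hreal hdiscr hg fun m hm => hvar m hm z hz
  refine Metric.tendsto_atTop.2 fun ε hε => (hconv ε hε).imp fun M hM m hm => ?_
  rw [Real.dist_0_eq_abs, abs_lt]
  exact ⟨(neg_neg_of_pos hε).trans_le (norm_nonneg _), hM m hm z hz⟩

open Filter Matrix Topology in
/-- Theorem B, second part: if ∑ 1/|aₙ| < ∞ and the hypotheses hold for every i,
every generalised eigenvector is square-summable. -/
theorem statement2
    (a b : ℕ → ℂ) (ha : ∀ n, a n ≠ 0)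
    (N : ℕ) (hN : 1 ≤ N)
    (K : Set ℂ) (hK : IsCompact K)
    (hyp : ∀ i < N, ∃ γ : ℂ, ‖γ‖ = 1 ∧ ∃ 𝒳 : ℂ → Matrix (Fin 2) (Fin 2) ℂ,
      ContinuousOn 𝒳 K ∧
      (∀ ε > (0:ℝ), ∃ M : ℕ, ∀ n, M ≤ n → ∀ z ∈ K,
        opNorm (transfer a b N (n*N+i) z - 𝒳 z) < ε) ∧
      Tendsto (fun n : ℕ => a (n*N+i-1) / (‖a (n*N+i-1)‖ : ℂ)) atTop (𝓝 γ) ∧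
      Tendsto (fun n : ℕ => a (n*N+i-1) / a ((n+1)*N+i-1)) atTop (𝓝 1) ∧
      (∀ z ∈ K, RealEntries (𝒳 z) ∧ IsUnit (𝒳 z) ∧ (_root_.discr (𝒳 z)).re < 0) ∧
      MemD1K K (fun n z => transfer a b N (n*N+i) z))
    (hsum : Summable (fun n : ℕ => 1 / ‖a n‖)) :
    ∀ z ∈ K, ∀ u : ℕ → ℂ, IsGenEigen a b z u → Summable (fun n : ℕ => ‖u n‖^2) :=
  statement2_general a b ha N hN K hyp hsum
end

section
/- Let V be a normed algebra (‖xy‖ ≤ ‖x‖·‖y‖) with unit, equipped with a conjugation x ↦ x̄ which is additive, norm-preserving, multiplicative (conj(xy) = x̄·ȳ) and satisfies conj(1) = 1. Then for any sequences (x_n : n ≥ M), (y_n : n ≥ M) in V: (1) Ṽ₁(x_n·y_n : n ≥ M) ≤ sup_{n≥M} ‖x_n‖ · Ṽ₁(y_n : n ≥ M) + sup_{n≥M} ‖y_n‖ · Ṽ₁(x_n : n ≥ M); and (2) if every x_n is invertible, then Ṽ₁(x_n⁻¹ : n ≥ M) ≤ sup_{n≥M} ‖x_n⁻¹‖² ·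 Ṽ₁(x_n : n ≥ M). -/
open scoped ENNReal NNReal

/-- Proposition 2: bounds on the twisted total variation of products and inverses
in a normed algebra with a multiplicative conjugation. -/
theorem statement4 {V : Type*} [NormedRing V] [NormOneClass V]
    (conj : V → V)
    (hadd : ∀ x y, conj (x + y) = conj x + conj y)
    (hmul : ∀ x y, conj (x * y) = conj x * conj y)
    (hone : conj 1 = 1)
    (hnorm : ∀ x, ‖conj x‖ = ‖x‖)
    (M : ℕ) (x y : ℕ → V) :
    ((∑' n : ℕ, (‖x (M+n+1) * y (M+n+1) - conj (x (M+n) * y (M+n))‖₊ : ℝ≥0∞)) ≤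
      (⨆ n : ℕ, (‖x (M+n)‖₊ : ℝ≥0∞)) *
        (∑' n : ℕ, (‖y (M+n+1) - conj (y (M+n))‖₊ : ℝ≥0∞)) +
      (⨆ n : ℕ, (‖y (M+n)‖₊ : ℝ≥0∞)) *
        (∑' n : ℕ, (‖x (M+n+1) - conj (x (M+n))‖₊ : ℝ≥0∞))) ∧
    ((∀ n : ℕ, IsUnit (x (M+n))) →
      (∑' n : ℕ, (‖Ring.inverse (x (M+n+1)) - conj (Ring.inverse (x (M+n)))‖₊ : ℝ≥0∞)) ≤
        (⨆ n : ℕ, (‖Ring.inverse (x (M+n))‖₊ : ℝ≥0∞))^2 *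
          (∑' n : ℕ, (‖x (M+n+1) - conj (x (M+n))‖₊ : ℝ≥0∞))) := by
  have hnn : ∀ v : V, ‖conj v‖₊ = ‖v‖₊ := fun v => by
    ext; simpa using hnorm v
  constructor
  · set Sx : ℝ≥0∞ := ⨆ n : ℕ, (‖x (M+n)‖₊ : ℝ≥0∞) with hSx
    set Sy : ℝ≥0∞ := ⨆ n : ℕ, (‖y (M+n)‖₊ : ℝ≥0∞) with hSy
    calc (∑' n : ℕ, (‖x (M+n+1) * y (M+n+1) - conj (x (M+n) * y (M+n))‖₊ : ℝ≥0∞))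
        ≤ ∑' n : ℕ, (Sx * (‖y (M+n+1) - conj (y (M+n))‖₊ : ℝ≥0∞)
            + Sy * (‖x (M+n+1) - conj (x (M+n))‖₊ : ℝ≥0∞)) := by
          apply ENNReal.tsum_le_tsum
          intro n
          have hid : x (M+n+1) * y (M+n+1) - conj (x (M+n) * y (M+n))
              = x (M+n+1) * (y (M+n+1) - conj (y (M+n)))
                + (x (M+n+1) - conj (x (M+n))) * conj (y (M+n)) := by
            rw [hmul]; noncomm_ring
          rw [hid]
          calc (‖x (M+n+1) * (y (M+n+1) - conj (y (M+n)))
                + (x (M+n+1) - conj (x (M+n))) * conj (y (M+n))‖₊ : ℝ≥0∞)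
              ≤ (‖x (M+n+1)‖₊ : ℝ≥0∞) * ‖y (M+n+1) - conj (y (M+n))‖₊
                + (‖x (M+n+1) - conj (x (M+n))‖₊ : ℝ≥0∞) * ‖conj (y (M+n))‖₊ := by
                have := (nnnorm_add_le (x (M+n+1) * (y (M+n+1) - conj (y (M+n))))
                  ((x (M+n+1) - conj (x (M+n))) * conj (y (M+n)))).trans
                  (add_le_add (nnnorm_mul_le _ _) (nnnorm_mul_le _ _))
                exact_mod_cast ENNReal.coe_le_coe.2 this
            _ ≤ Sx * (‖y (M+n+1) - conj (y (M+n))‖₊ : ℝ≥0∞)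
                + Sy * (‖x (M+n+1) - conj (x (M+n))‖₊ : ℝ≥0∞) := by
                rw [hnn]
                refine add_le_add (mul_le_mul' (le_iSup (fun m => (‖x (M+m)‖₊ : ℝ≥0∞)) (n+1)) le_rfl) ?_
                rw [mul_comm]
                exact mul_le_mul' (le_iSup (fun m => (‖y (M+m)‖₊ : ℝ≥0∞)) n) le_rfl
      _ = Sx * (∑' n : ℕ, (‖y (M+n+1) - conj (y (M+n))‖₊ : ℝ≥0∞))
          + Sy * (∑' n : ℕ, (‖x (M+n+1) - conj (x (M+n))‖₊ : ℝ≥0∞)) := by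
          rw [ENNReal.tsum_add, ENNReal.tsum_mul_left, ENNReal.tsum_mul_left]
  · intro hu
    set S : ℝ≥0∞ := ⨆ n : ℕ, (‖Ring.inverse (x (M+n))‖₊ : ℝ≥0∞) with hS
    calc (∑' n : ℕ, (‖Ring.inverse (x (M+n+1)) - conj (Ring.inverse (x (M+n)))‖₊ : ℝ≥0∞))
        ≤ ∑' n : ℕ, S^2 * (‖x (M+n+1) - conj (x (M+n))‖₊ : ℝ≥0∞) := by
          apply ENNReal.tsum_le_tsum
          intro n
          have e1 : conj (x (M+n)) * conj (Ring.inverse (x (M+n))) = 1 := by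
            rw [← hmul, Ring.mul_inverse_cancel _ (hu n), hone]
          have e2 : Ring.inverse (x (M+n+1)) * x (M+n+1) = 1 :=
            Ring.inverse_mul_cancel _ (hu (n+1))
          have hid : Ring.inverse (x (M+n+1)) - conj (Ring.inverse (x (M+n)))
              = Ring.inverse (x (M+n+1)) * (conj (x (M+n)) - x (M+n+1))
                * conj (Ring.inverse (x (M+n))) := by
            rw [mul_sub, sub_mul, mul_assoc, e1, mul_one, e2, one_mul]
          rw [hid]
          calc (‖Ring.inverse (x (M+n+1)) * (conj (x (M+n)) - x (M+n+1))
                * conj (Ring.inverse (x (M+n)))‖₊ : ℝ≥0∞)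
              ≤ (‖Ring.inverse (x (M+n+1))‖₊ : ℝ≥0∞) * ‖conj (x (M+n)) - x (M+n+1)‖₊
                * ‖conj (Ring.inverse (x (M+n)))‖₊ := by
                refine le_trans (ENNReal.coe_le_coe.2 (nnnorm_mul_le _ _)) ?_
                push_cast
                gcongr
                exact_mod_cast ENNReal.coe_le_coe.2 (nnnorm_mul_le _ _)
            _ = (‖Ring.inverse (x (M+n+1))‖₊ : ℝ≥0∞) * ‖Ring.inverse (x (M+n))‖₊
                * ‖x (M+n+1) - conj (x (M+n))‖₊ := by
                rw [hnn, ← neg_sub, nnnorm_neg]; ring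
            _ ≤ S^2 * (‖x (M+n+1) - conj (x (M+n))‖₊ : ℝ≥0∞) := by
                rw [sq]
                gcongr
                · exact le_iSup (fun m => (‖Ring.inverse (x (M+m))‖₊ : ℝ≥0∞)) (n+1)
                · exact le_iSup (fun m => (‖Ring.inverse (x (M+m))‖₊ : ℝ≥0∞)) n
      _ = S^2 * (∑' n : ℕ, (‖x (M+n+1) - conj (x (M+n))‖₊ : ℝ≥0∞)) :=
          ENNReal.tsum_mul_left
end

section
/- Let K ⊂ ℂ be compact and let Y_n : K → M₂(ℂ) be continuous maps (n ≥ 1) such that sup_{z∈K} ‖Y_n(z) − 𝒴(z)‖ → 0 as n → ∞, where 𝒴 : K → M₂(ℂ) is such that for every z ∈ K the matrix 𝒴(z) has real entries, is invertible, and satisfies discr 𝒴(z) < 0. Then the family of quadratic forms Q_n^z(v) = ⟨sym[E·Y_n(z)]·v, v⟩ is uniformly non-degenerated on K: there exist c₁ > 0, c₂ > 0 and M ≥ 1 such that c₁‖v‖² ≤ |Q_n^z(v)| ≤ c₂‖v‖² for all v ∈ ℂ², z ∈ K and n ≥ M. -/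
open Filter Matrix Topology

/-! For real `𝒴` one computes `det sym[E 𝒴] = -discr 𝒴 / 4 > 0`, so the Hermitian matrix
`A = sym[E 𝒴(z)]` is definite and `|⟨A v, v⟩| ≥ (det A / |tr A|) ‖v‖²`. As a uniform limit of
continuous maps, `𝒴` is continuous, so on the compact set `K` this constant is bounded below by
some `c > 0` and `‖𝒴‖` is bounded above. Finally `|⟨sym[E X] v, v⟩| ≤ ‖X‖ ‖v‖²` for the operator
norm, so once `‖Y_n - 𝒴‖ < c / 2` both bounds survive the perturbation. -/

open scoped Matrix.Norms.L2Operator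

lemma Qform_sub (M N : Matrix (Fin 2) (Fin 2) ℂ) (v : Fin 2 → ℂ) :
    Qform (M - N) v = Qform M v - Qform N v := by
  simp only [Qform, sub_mulVec, dotProduct_sub]

lemma Qform_neg (M : Matrix (Fin 2) (Fin 2) ℂ) (v : Fin 2 → ℂ) :
    Qform (-M) v = -Qform M v := by
  simp only [Qform, neg_mulVec, dotProduct_neg]

lemma norm_Qform_le (M : Matrix (Fin 2) (Fin 2) ℂ) (v : Fin 2 → ℂ) :
    ‖Qform M v‖ ≤ ‖M‖ * (‖v 0‖ ^ 2 + ‖v 1‖ ^ 2) := by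
  set x : EuclideanSpace ℂ (Fin 2) := WithLp.toLp 2 v
  have hQ : Qform M v = inner ℂ x (toEuclideanCLM (𝕜 := ℂ) M x) := by
    rw [EuclideanSpace.inner_eq_star_dotProduct, Qform, dotProduct_comm]; rfl
  have hx : ‖x‖ ^ 2 = ‖v 0‖ ^ 2 + ‖v 1‖ ^ 2 := by
    rw [EuclideanSpace.norm_sq_eq, Fin.sum_univ_two]
  calc ‖Qform M v‖ ≤ ‖x‖ * ‖toEuclideanCLM (𝕜 := ℂ) M x‖ := hQ ▸ norm_inner_le_norm _ _
    _ ≤ ‖x‖ * (‖M‖ * ‖x‖) := by gcongr; exact (toEuclideanCLM (𝕜 := ℂ) M).le_opNorm x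
    _ = ‖M‖ * (‖v 0‖ ^ 2 + ‖v 1‖ ^ 2) := by rw [← hx]; ring

lemma norm_symQ_le (X : Matrix (Fin 2) (Fin 2) ℂ) : ‖symQ X‖ ≤ ‖X‖ := by
  calc ‖symQ X‖ ≤ ‖(2⁻¹ : ℂ)‖ * (‖X‖ + ‖Xᴴ‖) :=
        (norm_smul_le _ _).trans (by gcongr; exact norm_add_le _ _)
    _ = ‖X‖ := by rw [l2_opNorm_conjTranspose]; norm_num; ring

lemma symQ_sub (X Y : Matrix (Fin 2) (Fin 2) ℂ) : symQ (X - Y) = symQ X - symQ Y := by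
  simp only [symQ, conjTranspose_sub, ← smul_sub]
  abel_nf

lemma continuous_symQ : Continuous symQ := by
  unfold symQ; fun_prop

lemma isHermitian_symQ (X : Matrix (Fin 2) (Fin 2) ℂ) : (symQ X).IsHermitian := by
  simp [IsHermitian, symQ, conjTranspose_smul, add_comm]

lemma Ematrix_mem_unitary : Ematrix ∈ unitary (Matrix (Fin 2) (Fin 2) ℂ) := by
  rw [← unitaryGroup, mem_unitaryGroup_iff]
  ext i j
  fin_cases i <;> fin_cases j <;> simp [Ematrix, star_eq_conjTranspose, mul_apply, Fin.sum_univ_two]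

lemma Ematrix_mul (X : Matrix (Fin 2) (Fin 2) ℂ) :
    Ematrix * X = !![-X 1 0, -X 1 1; X 0 0, X 0 1] := by
  ext i j; fin_cases i <;> fin_cases j <;> simp [Ematrix, mul_apply, Fin.sum_univ_two]

lemma norm_Ematrix_mul (X : Matrix (Fin 2) (Fin 2) ℂ) : ‖Ematrix * X‖ = ‖X‖ :=
  CStarRing.norm_mem_unitary_mul X Ematrix_mem_unitary

lemma norm_symQ_Ematrix_mul_le (X : Matrix (Fin 2) (Fin 2) ℂ) : ‖symQ (Ematrix * X)‖ ≤ ‖X‖ :=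
  (norm_symQ_le _).trans (norm_Ematrix_mul X).le

lemma norm_Qform_symQ_sub_le (X Y : Matrix (Fin 2) (Fin 2) ℂ) (v : Fin 2 → ℂ) :
    ‖Qform (symQ (Ematrix * X)) v - Qform (symQ (Ematrix * Y)) v‖
      ≤ ‖X - Y‖ * (‖v 0‖ ^ 2 + ‖v 1‖ ^ 2) := by
  rw [← Qform_sub, ← symQ_sub, ← mul_sub]
  exact (norm_Qform_le _ v).trans (by gcongr; exact norm_symQ_Ematrix_mul_le _)

lemma quadratic_lower_bound {a d c x y t : ℝ} (ha : 0 < a) (hdet : c ^ 2 < a * d)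
    (ht : |t| ≤ c * x * y) :
    (a * d - c ^ 2) / (a + d) * (x ^ 2 + y ^ 2) ≤ a * x ^ 2 + d * y ^ 2 + 2 * t := by
  have hd : 0 < d := pos_of_mul_pos_right (hdet.trans_le' (sq_nonneg c)) ha.le
  set ε := (a * d - c ^ 2) / (a + d)
  -- `ε` is chosen so that `(a - ε) (d - ε) = c² + ε²`, which makes the shifted form semidefinite.
  have hε : ε * (a + d) = a * d - c ^ 2 := div_mul_cancel₀ _ (by positivity)
  have hp : 0 < a - ε := by
    rw [sub_pos, div_lt_iff₀ (by positivity)]; nlinarith [sq_nonneg c]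
  have hpq : (a - ε) * (d - ε) = c ^ 2 + ε ^ 2 := by linear_combination -hε
  have hcross : 2 * (c * x * y) ≤ (a - ε) * x ^ 2 + (d - ε) * y ^ 2 := by
    have : 0 ≤ (a - ε) * ((a - ε) * x ^ 2 + (d - ε) * y ^ 2 - 2 * (c * x * y)) := by
      nlinarith [sq_nonneg ((a - ε) * x - c * y), sq_nonneg (ε * y)]
    nlinarith
  nlinarith [neg_abs_le t]

section Hermitian

variable {A : Matrix (Fin 2) (Fin 2) ℂ}

lemma Matrix.IsHermitian.apply_one_zero (hA : A.IsHermitian) : A 1 0 = star (A 0 1) :=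
  (hA.apply 1 0).symm

lemma Matrix.IsHermitian.ofReal_re_apply_self (hA : A.IsHermitian) (i : Fin 2) :
    ((A i i).re : ℂ) = A i i := by
  have := congrArg Complex.im (hA.apply i i)
  simp only [Complex.star_def, Complex.conj_im] at this
  exact Complex.ext rfl (by simp; linarith)

lemma Matrix.IsHermitian.re_Qform (hA : A.IsHermitian) (v : Fin 2 → ℂ) :
    (Qform A v).re = (A 0 0).re * ‖v 0‖ ^ 2 + (A 1 1).re * ‖v 1‖ ^ 2
      + 2 * (star (v 0) * A 0 1 * v 1).re := by
  rw [Qform, dotProduct, Fin.sum_univ_two, mulVec, mulVec, dotProduct, dotProduct,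
    Fin.sum_univ_two, Fin.sum_univ_two, hA.apply_one_zero, ← hA.ofReal_re_apply_self 0,
    ← hA.ofReal_re_apply_self 1]
  simp only [Pi.star_apply, Complex.star_def, Complex.add_re, Complex.mul_re, Complex.add_im,
    Complex.mul_im, Complex.conj_re, Complex.conj_im, Complex.ofReal_re, Complex.ofReal_im,
    Complex.sq_norm, Complex.normSq_apply]
  ring

lemma Matrix.IsHermitian.re_det (hA : A.IsHermitian) :
    A.det.re = (A 0 0).re * (A 1 1).re - ‖A 0 1‖ ^ 2 := by
  rw [det_fin_two, hA.apply_one_zero, ← hA.ofReal_re_apply_self 0, ← hA.ofReal_re_apply_self 1]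
  simp only [Complex.star_def, Complex.sub_re, Complex.mul_re, Complex.conj_re,
    Complex.conj_im, Complex.ofReal_re, Complex.ofReal_im, Complex.sq_norm, Complex.normSq_apply]
  ring

lemma Matrix.IsHermitian.re_apply_zero_ne_zero (hA : A.IsHermitian) (hdet : 0 < A.det.re) :
    (A 0 0).re ≠ 0 := by
  rw [hA.re_det] at hdet
  intro h
  rw [h, zero_mul, zero_sub] at hdet
  linarith [sq_nonneg ‖A 0 1‖]

lemma Matrix.IsHermitian.re_trace_ne_zero (hA : A.IsHermitian) (hdet : 0 < A.det.re) :
    A.trace.re ≠ 0 := by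
  rw [hA.re_det] at hdet
  rw [trace_fin_two, Complex.add_re]
  intro h
  rw [eq_neg_of_add_eq_zero_right h] at hdet
  nlinarith [sq_nonneg ‖A 0 1‖, sq_nonneg (A 0 0).re]

lemma Matrix.IsHermitian.le_re_Qform (hA : A.IsHermitian) (ha : 0 < (A 0 0).re)
    (hdet : 0 < A.det.re) (v : Fin 2 → ℂ) :
    A.det.re / |A.trace.re| * (‖v 0‖ ^ 2 + ‖v 1‖ ^ 2) ≤ (Qform A v).re := by
  rw [hA.re_Qform, hA.re_det, trace_fin_two, Complex.add_re]
  rw [hA.re_det, sub_pos] at hdet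
  have hd : 0 < (A 1 1).re := pos_of_mul_pos_right (hdet.trans_le' (sq_nonneg _)) ha.le
  rw [abs_of_pos (add_pos ha hd)]
  refine quadratic_lower_bound ha hdet ?_
  calc |(star (v 0) * A 0 1 * v 1).re| ≤ ‖star (v 0) * A 0 1 * v 1‖ := Complex.abs_re_le_norm _
    _ = ‖A 0 1‖ * ‖v 0‖ * ‖v 1‖ := by rw [norm_mul, norm_mul, norm_star]; ring

lemma Matrix.IsHermitian.le_norm_Qform (hA : A.IsHermitian) (hdet : 0 < A.det.re)
    (v : Fin 2 → ℂ) :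
    A.det.re / |A.trace.re| * (‖v 0‖ ^ 2 + ‖v 1‖ ^ 2) ≤ ‖Qform A v‖ := by
  rcases (hA.re_apply_zero_ne_zero hdet).lt_or_gt with hneg | hpos
  · have hdet' : 0 < (-A).det.re := by simpa [det_neg] using hdet
    have := hA.neg.le_re_Qform (by simpa using hneg) hdet' v
    rw [det_neg, trace_neg, Qform_neg] at this
    simpa using this.trans (Complex.re_le_norm _)
  · exact (hA.le_re_Qform hpos hdet v).trans (Complex.re_le_norm _)

end Hermitian

lemma det_symQ_Ematrix_mul {X : Matrix (Fin 2) (Fin 2) ℂ} (hX : RealEntries X) :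
    (symQ (Ematrix * X)).det = -_root_.discr X / 4 := by
  have hconj : ∀ p q, star (X p q) = X p q := fun p q => Complex.conj_eq_iff_im.mpr (hX p q)
  simp only [symQ, Ematrix_mul, _root_.discr, det_fin_two, trace_fin_two, Matrix.smul_apply,
    Matrix.add_apply, conjTranspose_apply, hconj, smul_eq_mul, of_apply, cons_val', cons_val_zero,
    cons_val_one, empty_val', cons_val_fin_one, star_neg]
  ring

lemma re_det_symQ_Ematrix_mul_pos {X : Matrix (Fin 2) (Fin 2) ℂ} (hX : RealEntries X)
    (hdiscr : (_root_.discr X).re < 0) : 0 < (symQ (Ematrix * X)).det.re := by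
  rw [det_symQ_Ematrix_mul hX, Complex.div_ofNat_re, Complex.neg_re]
  linarith

lemma IsCompact.exists_pos_mul_le_norm_Qform {α : Type*} [TopologicalSpace α] {K : Set α}
    (hK : IsCompact K) {A : α → Matrix (Fin 2) (Fin 2) ℂ} (hA : ContinuousOn A K)
    (hherm : ∀ z ∈ K, (A z).IsHermitian) (hdet : ∀ z ∈ K, 0 < (A z).det.re) :
    ∃ c > 0, ∀ z ∈ K, ∀ v : Fin 2 → ℂ, c * (‖v 0‖ ^ 2 + ‖v 1‖ ^ 2) ≤ ‖Qform (A z) v‖ := by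
  have htrace : ∀ z ∈ K, (A z).trace.re ≠ 0 := fun z hz =>
    (hherm z hz).re_trace_ne_zero (hdet z hz)
  have hdet_cont : ContinuousOn (fun z => (A z).det.re) K := by fun_prop
  have htrace_cont : ContinuousOn (fun z => |(A z).trace.re|) K := by fun_prop
  obtain ⟨c, hc, hcK⟩ := hK.exists_forall_le'
    (hdet_cont.div htrace_cont fun z hz => abs_ne_zero.mpr (htrace z hz))
    fun z hz => div_pos (hdet z hz) (abs_pos.mpr (htrace z hz))
  exact ⟨c, hc, fun z hz v => (mul_le_mul_of_nonneg_right (hcK z hz) (by positivity)).trans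
    ((hherm z hz).le_norm_Qform (hdet z hz) v)⟩

lemma tendstoUniformlyOn_of_opNorm {α : Type*} {K : Set α}
    {Y : ℕ → α → Matrix (Fin 2) (Fin 2) ℂ} {Y₀ : α → Matrix (Fin 2) (Fin 2) ℂ}
    (h : ∀ ε > (0:ℝ), ∃ M : ℕ, ∀ n, M ≤ n → ∀ z ∈ K, opNorm (Y n z - Y₀ z) < ε) :
    TendstoUniformlyOn Y Y₀ atTop K := by
  rw [Metric.tendstoUniformlyOn_iff]
  intro ε hε
  obtain ⟨M, hM⟩ := h ε hε
  filter_upwards [eventually_ge_atTop M] with n hn z hz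
  rw [dist_comm, dist_eq_norm]
  exact hM n hn z hz

open Filter Matrix Topology in
/-- Proposition 5: uniform non-degeneracy of the quadratic forms associated with a
uniformly convergent sequence of matrices whose limit is real, invertible and has
negative discriminant. -/
theorem statement5
    (K : Set ℂ) (hK : IsCompact K)
    (Y : ℕ → ℂ → Matrix (Fin 2) (Fin 2) ℂ)
    (hYcont : ∀ n, 1 ≤ n → ContinuousOn (Y n) K)
    (𝒴 : ℂ → Matrix (Fin 2) (Fin 2) ℂ)
    (hconv : ∀ ε > (0:ℝ), ∃ M : ℕ, ∀ n, M ≤ n → ∀ z ∈ K, opNorm (Y n z - 𝒴 z) < ε)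
    (h𝒴 : ∀ z ∈ K, RealEntries (𝒴 z) ∧ IsUnit (𝒴 z) ∧ (_root_.discr (𝒴 z)).re < 0) :
    UnifNonDeg K (fun n z v => Qform (symQ (Ematrix * Y n z)) v) := by
  have h𝒴cont : ContinuousOn 𝒴 K := (tendstoUniformlyOn_of_opNorm hconv).continuousOn
    ((eventually_ge_atTop 1).mono hYcont).frequently
  obtain ⟨c, hc, hlow⟩ := hK.exists_pos_mul_le_norm_Qform (A := fun z => symQ (Ematrix * 𝒴 z))
    ((continuous_symQ.comp (continuous_const.matrix_mul continuous_id)).comp_continuousOn h𝒴cont)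
    (fun z _ => isHermitian_symQ _)
    fun z hz => re_det_symQ_Ematrix_mul_pos (h𝒴 z hz).1 (h𝒴 z hz).2.2
  obtain ⟨C, hC, hCK⟩ := (hK.image_of_continuousOn h𝒴cont).isBounded.exists_pos_norm_le
  obtain ⟨M, hM⟩ := hconv (c / 2) (half_pos hc)
  refine ⟨c / 2, half_pos hc, C + c / 2, by positivity, max M 1, le_max_right _ _,
    fun v z hz n hn => ?_⟩
  set Qn := Qform (symQ (Ematrix * Y n z)) v
  set Q := Qform (symQ (Ematrix * 𝒴 z)) v
  set s := ‖v 0‖ ^ 2 + ‖v 1‖ ^ 2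
  have hpert : ‖Qn - Q‖ ≤ c / 2 * s :=
    (norm_Qform_symQ_sub_le _ _ v).trans
      (by gcongr; exact (hM n (le_of_max_le_left hn) z hz).le)
  have hup : ‖Q‖ ≤ C * s :=
    (norm_Qform_le _ v).trans
      (by gcongr; exact (norm_symQ_Ematrix_mul_le _).trans (hCK _ ⟨z, hz, rfl⟩))
  constructor
  · linarith [hlow z hz v, norm_sub_norm_le Q Qn, norm_sub_rev Q Qn]
  · linarith [norm_le_norm_add_norm_sub' Qn Q]
end

section
/- Let N be a positive integer, i ∈ {0, 1, …, N−1}, γ ∈ ℂ with |γ| = 1, and K ⊂ ℂ compact. Assume: (i) the family {(Q_{nN+i}^{z,γ} : n ≥ 1) : z ∈ K} is uniformly non-degenerated; and (ii) there exist c′₁ > 0, c′₂ > 0 and M′ ≥ 1 such that for all α ∈ ℂ² with ‖α‖ = 1, all z ∈ K and all n ≥ M′ one has c′₁ ≤ |S_n^γ(α, z)| ≤ c′₂. Then there exists c > 1 such that for all z ∈ K, all n ≥ 1 and every generalised eigenvector u associated with z: c⁻¹(|u_0|² + |u_1|²) ≤ |a_{(n+1)N+i−1}|·(|u_{nN+i−1}|²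 + |u_{nN+i}|²) ≤ c·(|u_0|² + |u_1|²). -/
open Filter Matrix Topology

/-!
Both sides are homogeneous of degree two in `u`, so it suffices to bound the weighted norm
`|a_{m+N-1}| (|u_{m-1}|² + |u_m|²)`, `m = nN + i`, for `u` normalised by `|u_0|² + |u_1|² = 1`.
For large `n` the Turán determinant factors as `S_m = |a_{m+N-1}| Q_m(u_{m-1}, u_m)`, so the
non-degeneracy of `Q` and the two-sided bound on `S` pin the weighted norm between two positive
constants. For each of the finitely many remaining `n` the weighted norm is a continuous function
of `(z, u_0, u_1)` on the compact set `K × {|u_0|² + |u_1|² = 1}`, positive because consecutive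
terms of a generalised eigenvector never both vanish.
-/

section GenEigen

variable {a b : ℕ → ℂ} {z : ℂ} {u : ℕ → ℂ}

theorem IsGenEigen.smul (hu : IsGenEigen a b z u) {c : ℂ} (hc : c ≠ 0) :
    IsGenEigen a b z (c • u) := by
  refine ⟨fun h => hu.1 ?_, fun n hn => ?_⟩
  · simpa [hc] using h
  · simp only [Pi.smul_apply, smul_eq_mul]
    linear_combination c * hu.2 n hn

theorem IsGenEigen.exists_smul_normalized (hu : IsGenEigen a b z u) :
    ∃ (s : ℂ) (w : ℕ → ℂ), IsGenEigen a b z w ∧ ‖w 0‖ ^ 2 + ‖w 1‖ ^ 2 = 1 ∧ u = s • w := by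
  set t := ‖u 0‖ ^ 2 + ‖u 1‖ ^ 2
  have ht : 0 < t := by
    rcases not_and_or.1 hu.1 with h | h
    · have := norm_pos_iff.2 h; positivity
    · have := norm_pos_iff.2 h; positivity
  have hs : ((√t : ℝ) : ℂ) ≠ 0 := Complex.ofReal_ne_zero.2 (Real.sqrt_pos.2 ht).ne'
  refine ⟨√t, (√t : ℂ)⁻¹ • u, hu.smul (inv_ne_zero hs), ?_, (smul_inv_smul₀ hs u).symm⟩
  simp only [Pi.smul_apply, smul_eq_mul, norm_mul, norm_inv, Complex.norm_real,
    Real.norm_of_nonneg (Real.sqrt_nonneg t), mul_pow, inv_pow, Real.sq_sqrt ht.le, ← mul_add]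
  exact inv_mul_cancel₀ ht.ne'

theorem IsGenEigen.ne_zero_or_ne_zero_succ (ha : ∀ n, a n ≠ 0) (hu : IsGenEigen a b z u) :
    ∀ k, u k ≠ 0 ∨ u (k + 1) ≠ 0 := by
  intro k
  induction k with
  | zero => exact not_and_or.1 hu.1
  | succ m ih =>
    by_contra! h
    have hrec := hu.2 (m + 1) (by omega)
    simp only [Nat.add_sub_cancel, h.1, h.2, mul_zero, zero_add, add_zero] at hrec
    exact ih.elim (· ((mul_eq_zero.1 hrec.symm).resolve_left (ha m))) (· h.1)

theorem IsGenEigen.eq_gev (ha : ∀ n, a n ≠ 0) (hu : IsGenEigen a b z u) :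
    u = gev a b z ![u 0, u 1] := by
  suffices h : ∀ n, u n = gev a b z ![u 0, u 1] n ∧ u (n + 1) = gev a b z ![u 0, u 1] (n + 1) from
    funext fun n => (h n).1
  intro n
  induction n with
  | zero => exact ⟨rfl, rfl⟩
  | succ k ih =>
    refine ⟨ih.2, ?_⟩
    have h := hu.2 (k + 1) (by omega)
    simp only [Nat.add_sub_cancel] at h
    rw [gev, ← ih.1, ← ih.2, eq_div_iff (ha (k + 1))]
    linear_combination -h

end GenEigen

theorem isGenEigen_gev {a b : ℕ → ℂ} (ha : ∀ n, a n ≠ 0) (z : ℂ) {α : Fin 2 → ℂ}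
    (hα : ¬(α 0 = 0 ∧ α 1 = 0)) : IsGenEigen a b z (gev a b z α) := by
  refine ⟨hα, fun n hn => ?_⟩
  obtain ⟨m, rfl⟩ : ∃ m, n = m + 1 := ⟨n - 1, by omega⟩
  rw [Nat.add_sub_cancel, gev, mul_div_cancel₀ _ (ha (m + 1))]
  ring

theorem continuous_gev (a b : ℕ → ℂ) (n : ℕ) :
    Continuous fun p : ℂ × (Fin 2 → ℂ) => gev a b p.1 p.2 n := by
  induction n using Nat.strong_induction_on with
  | _ n ih =>
    match n with
    | 0 => exact (continuous_apply 0).comp continuous_snd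
    | 1 => exact (continuous_apply 1).comp continuous_snd
    | k + 2 =>
      exact (((continuous_fst.sub continuous_const).mul (ih (k + 1) (by omega))).sub
        (continuous_const.mul (ih k (by omega)))).div_const _

theorem isCompact_normSq_eq_one : IsCompact {α : Fin 2 → ℂ | ‖α 0‖ ^ 2 + ‖α 1‖ ^ 2 = 1} := by
  refine Metric.isCompact_of_isClosed_isBounded (isClosed_eq (by fun_prop) continuous_const)
    ((Metric.isBounded_closedBall (x := (0 : Fin 2 → ℂ)) (r := 1)).subset fun α hα => ?_)
  replace hα : ‖α 0‖ ^ 2 + ‖α 1‖ ^ 2 = 1 := hα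
  rw [Metric.mem_closedBall, dist_zero_right, pi_norm_le_iff_of_nonneg zero_le_one]
  intro j
  fin_cases j
  · exact (sq_le_one_iff₀ (norm_nonneg (α 0))).1 (by nlinarith [sq_nonneg ‖α 1‖])
  · exact (sq_le_one_iff₀ (norm_nonneg (α 1))).1 (by nlinarith [sq_nonneg ‖α 0‖])

theorem exists_normSq_mem_Icc_of_isCompact {a b : ℕ → ℂ} (ha : ∀ n, a n ≠ 0) {K : Set ℂ}
    (hK : IsCompact K) {m : ℕ} (hm : 1 ≤ m) :
    ∃ c₁ > 0, ∃ c₂, ∀ z ∈ K, ∀ u : ℕ → ℂ, IsGenEigen a b z u → ‖u 0‖ ^ 2 + ‖u 1‖ ^ 2 = 1 →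
      ‖u (m - 1)‖ ^ 2 + ‖u m‖ ^ 2 ∈ Set.Icc c₁ c₂ := by
  set S := K ×ˢ {α : Fin 2 → ℂ | ‖α 0‖ ^ 2 + ‖α 1‖ ^ 2 = 1}
  set f : ℂ × (Fin 2 → ℂ) → ℝ := fun p => ‖gev a b p.1 p.2 (m - 1)‖ ^ 2 + ‖gev a b p.1 p.2 m‖ ^ 2
  have hS : IsCompact S := hK.prod isCompact_normSq_eq_one
  have hf : Continuous f := by
    have := continuous_gev a b (m - 1)
    have := continuous_gev a b m
    fun_prop
  have hpos : ∀ p ∈ S, 0 < f p := by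
    rintro ⟨z, α⟩ ⟨-, hα⟩
    have hα0 : ¬(α 0 = 0 ∧ α 1 = 0) := by
      rintro ⟨h0, h1⟩
      simp [h0, h1] at hα
    have key := (isGenEigen_gev (b := b) ha z hα0).ne_zero_or_ne_zero_succ ha (m - 1)
    rw [Nat.sub_add_cancel hm] at key
    rcases key with h | h
    · have := norm_pos_iff.2 h; positivity
    · have := norm_pos_iff.2 h; positivity
  obtain ⟨c₁, hc₁, hlow⟩ := hS.exists_forall_le' hf.continuousOn hpos
  obtain ⟨c₂, hup⟩ := hS.bddAbove_image hf.continuousOn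
  refine ⟨c₁, hc₁, c₂, fun z hz u hu hu1 => ?_⟩
  have hmem : (z, ![u 0, u 1]) ∈ S := ⟨hz, by simpa using hu1⟩
  have hfu : f (z, ![u 0, u 1]) = ‖u (m - 1)‖ ^ 2 + ‖u m‖ ^ 2 := by
    simp only [f, ← hu.eq_gev ha]
  rw [← hfu]
  exact ⟨hlow _ hmem, hup (Set.mem_image_of_mem f hmem)⟩

theorem Icc_inv_self_subset {c c' : ℝ} (hc : 0 < c) (h : c ≤ c') :
    Set.Icc c⁻¹ c ⊆ Set.Icc c'⁻¹ c' :=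
  Set.Icc_subset_Icc (inv_anti₀ hc h) h

theorem exists_Icc_subset_Icc_inv_self {c₁ : ℝ} (hc₁ : 0 < c₁) (c₂ : ℝ) :
    ∃ c > 0, Set.Icc c₁ c₂ ⊆ Set.Icc c⁻¹ c :=
  ⟨max c₁⁻¹ c₂, lt_max_of_lt_left (inv_pos.2 hc₁),
    Set.Icc_subset_Icc (inv_le_of_inv_le₀ hc₁ (le_max_left _ _)) (le_max_right _ _)⟩

theorem exists_pos_forall_of_eventually {P : ℕ → ℝ → Prop}
    (hmono : ∀ n c c', 0 < c → c ≤ c' → P n c → P n c') (hP : ∀ n, ∃ c > 0, P n c)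
    (hev : ∃ c > 0, ∀ᶠ n in atTop, P n c) : ∃ c > 0, ∀ n, P n c := by
  choose f hf0 hf using hP
  obtain ⟨c, hc, hcev⟩ := hev
  obtain ⟨M, hM⟩ := eventually_atTop.1 hcev
  obtain ⟨C, hC⟩ := ((Finset.range M).image f).exists_le
  refine ⟨max c C, lt_max_of_lt_left hc, fun n => ?_⟩
  rcases le_or_gt M n with h | h
  · exact hmono n c _ hc (le_max_left _ _) (hM n h)
  · exact hmono n _ _ (hf0 n)
      ((hC _ (Finset.mem_image_of_mem f (Finset.mem_range.2 h))).trans (le_max_right _ _)) (hf n)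

noncomputable def weightedNormSq (a : ℕ → ℂ) (N : ℕ) (u : ℕ → ℂ) (m : ℕ) : ℝ :=
  ‖a (m + N - 1)‖ * (‖u (m - 1)‖ ^ 2 + ‖u m‖ ^ 2)

theorem weightedNormSq_smul (a : ℕ → ℂ) (N : ℕ) (s : ℂ) (u : ℕ → ℂ) (m : ℕ) :
    weightedNormSq a N (s • u) m = ‖s‖ ^ 2 * weightedNormSq a N u m := by
  simp only [weightedNormSq, Pi.smul_apply, smul_eq_mul, norm_mul, mul_pow]
  ring

theorem norm_Sdet (a b : ℕ → ℂ) (N : ℕ) (γ z : ℂ) (u : ℕ → ℂ) (m : ℕ) :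
    ‖Sdet a b N γ z u m‖ = ‖a (m + N - 1)‖ * ‖Qgam a b N γ m z ![u (m - 1), u m]‖ := by
  rw [Sdet, norm_mul, Complex.norm_real, norm_norm]

theorem weightedNormSq_mem_Icc_of_Sdet {a b : ℕ → ℂ} {N : ℕ} {γ z : ℂ} {u : ℕ → ℂ} {m : ℕ}
    {q₁ q₂ s₁ s₂ : ℝ} (hq₁ : 0 < q₁) (hq₂ : 0 < q₂)
    (hQ : ‖Qgam a b N γ m z ![u (m - 1), u m]‖ ∈
      Set.Icc (q₁ * (‖u (m - 1)‖ ^ 2 + ‖u m‖ ^ 2)) (q₂ * (‖u (m - 1)‖ ^ 2 + ‖u m‖ ^ 2)))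
    (hS : ‖Sdet a b N γ z u m‖ ∈ Set.Icc s₁ s₂) :
    weightedNormSq a N u m ∈ Set.Icc (s₁ / q₂) (s₂ / q₁) := by
  rw [norm_Sdet] at hS
  have hA := norm_nonneg (a (m + N - 1))
  constructor
  · rw [div_le_iff₀ hq₂, weightedNormSq]
    nlinarith [mul_le_mul_of_nonneg_left hQ.2 hA, hS.1]
  · rw [le_div_iff₀ hq₁, weightedNormSq]
    nlinarith [mul_le_mul_of_nonneg_left hQ.1 hA, hS.2]

theorem exists_eventually_weightedNormSq_mem_Icc {a b : ℕ → ℂ} {N : ℕ} (hN : 1 ≤ N) {i : ℕ}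
    {γ : ℂ} {K : Set ℂ} (hQ : UnifNonDeg K (fun n z v => Qgam a b N γ (n*N+i) z v))
    (hS : ∃ c₁ > (0:ℝ), ∃ c₂ > (0:ℝ), ∃ M : ℕ, 1 ≤ M ∧
      ∀ z ∈ K, ∀ u : ℕ → ℂ, IsGenEigen a b z u → ‖u 0‖^2 + ‖u 1‖^2 = 1 →
        ∀ n, M ≤ n → c₁ ≤ ‖Sdet a b N γ z u n‖ ∧ ‖Sdet a b N γ z u n‖ ≤ c₂) :
    ∃ c > 0, ∀ᶠ n in atTop, ∀ z ∈ K, ∀ u : ℕ → ℂ, IsGenEigen a b z u →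
      ‖u 0‖ ^ 2 + ‖u 1‖ ^ 2 = 1 → weightedNormSq a N u (n * N + i) ∈ Set.Icc c⁻¹ c := by
  obtain ⟨q₁, hq₁, q₂, hq₂, MQ, -, hQb⟩ := hQ
  obtain ⟨s₁, hs₁, s₂, -, MS, -, hSb⟩ := hS
  obtain ⟨c, hc, hsub⟩ := exists_Icc_subset_Icc_inv_self (div_pos hs₁ hq₂) (s₂ / q₁)
  refine ⟨c, hc, eventually_atTop.2 ⟨max MQ MS, fun n hn z hz u hu hu1 => hsub ?_⟩⟩
  have hmS : MS ≤ n * N + i := by nlinarith [le_max_right MQ MS]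
  have hQn := hQb ![u (n * N + i - 1), u (n * N + i)] z hz n (le_of_max_le_left hn)
  simp only [Matrix.cons_val_zero, Matrix.cons_val_one] at hQn
  exact weightedNormSq_mem_Icc_of_Sdet hq₁ hq₂ hQn (hSb z hz u hu hu1 _ hmS)

theorem exists_weightedNormSq_mem_Icc_of_isCompact {a b : ℕ → ℂ} (ha : ∀ n, a n ≠ 0) (N : ℕ)
    {K : Set ℂ} (hK : IsCompact K) {m : ℕ} (hm : 1 ≤ m) :
    ∃ c > 0, ∀ z ∈ K, ∀ u : ℕ → ℂ, IsGenEigen a b z u → ‖u 0‖ ^ 2 + ‖u 1‖ ^ 2 = 1 →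
      weightedNormSq a N u m ∈ Set.Icc c⁻¹ c := by
  obtain ⟨c₁, hc₁, c₂, hbound⟩ := exists_normSq_mem_Icc_of_isCompact ha hK hm
  have hA : 0 < ‖a (m + N - 1)‖ := norm_pos_iff.2 (ha _)
  obtain ⟨c, hc, hsub⟩ :=
    exists_Icc_subset_Icc_inv_self (mul_pos hA hc₁) (‖a (m + N - 1)‖ * c₂)
  refine ⟨c, hc, fun z hz u hu hu1 => hsub ?_⟩
  have h := hbound z hz u hu hu1
  exact ⟨mul_le_mul_of_nonneg_left h.1 hA.le, mul_le_mul_of_nonneg_left h.2 hA.le⟩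

open Filter Matrix Topology in
theorem statement8_general
    (a b : ℕ → ℂ) (ha : ∀ n, a n ≠ 0)
    (N : ℕ) (hN : 1 ≤ N) (i : ℕ)
    (γ : ℂ)
    (K : Set ℂ) (hK : IsCompact K)
    (hQ : UnifNonDeg K (fun n z v => Qgam a b N γ (n*N+i) z v))
    (hS : ∃ c₁ > (0:ℝ), ∃ c₂ > (0:ℝ), ∃ M : ℕ, 1 ≤ M ∧
      ∀ z ∈ K, ∀ u : ℕ → ℂ, IsGenEigen a b z u → ‖u 0‖^2 + ‖u 1‖^2 = 1 →
        ∀ n, M ≤ n → c₁ ≤ ‖Sdet a b N γ z u n‖ ∧ ‖Sdet a b N γ z u n‖ ≤ c₂) :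
    ∃ c : ℝ, 1 < c ∧ ∀ z ∈ K, ∀ n, 1 ≤ n → ∀ u : ℕ → ℂ, IsGenEigen a b z u →
      c⁻¹ * (‖u 0‖^2 + ‖u 1‖^2) ≤
        ‖a ((n+1)*N+i-1)‖ * (‖u (n*N+i-1)‖^2 + ‖u (n*N+i)‖^2) ∧
      ‖a ((n+1)*N+i-1)‖ * (‖u (n*N+i-1)‖^2 + ‖u (n*N+i)‖^2) ≤
        c * (‖u 0‖^2 + ‖u 1‖^2) := by
  obtain ⟨c, hc, hbound⟩ : ∃ c > 0, ∀ n, 1 ≤ n → ∀ z ∈ K, ∀ u : ℕ → ℂ, IsGenEigen a b z u →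
      ‖u 0‖ ^ 2 + ‖u 1‖ ^ 2 = 1 → weightedNormSq a N u (n * N + i) ∈ Set.Icc c⁻¹ c := by
    refine exists_pos_forall_of_eventually (fun n c c' hc hcc' hP hn z hz u hu hu1 =>
      Icc_inv_self_subset hc hcc' (hP hn z hz u hu hu1)) (fun n => ?_) ?_
    · by_cases hn : 1 ≤ n
      · obtain ⟨c, hc, h⟩ :=
          exists_weightedNormSq_mem_Icc_of_isCompact (b := b) ha N hK (m := n * N + i) (by nlinarith)
        exact ⟨c, hc, fun _ => h⟩
      · exact ⟨1, one_pos, fun h => absurd h hn⟩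
    · obtain ⟨c, hc, h⟩ := exists_eventually_weightedNormSq_mem_Icc hN hQ hS
      exact ⟨c, hc, h.mono fun _ h _ => h⟩
  refine ⟨max c 2, lt_max_of_lt_right one_lt_two, fun z hz n hn u hu => ?_⟩
  obtain ⟨s, w, hw, hw1, rfl⟩ := hu.exists_smul_normalized
  have hwb := Icc_inv_self_subset hc (le_max_left c 2) (hbound n hn z hz w hw hw1)
  have hnorm : ‖(s • w) 0‖ ^ 2 + ‖(s • w) 1‖ ^ 2 = ‖s‖ ^ 2 := by
    simp only [Pi.smul_apply, smul_eq_mul, norm_mul, mul_pow, ← mul_add, hw1, mul_one]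
  rw [show (n + 1) * N + i - 1 = n * N + i + N - 1 by rw [add_mul, one_mul]; omega, hnorm]
  change _ ≤ weightedNormSq a N (s • w) (n * N + i) ∧ weightedNormSq a N (s • w) (n * N + i) ≤ _
  rw [weightedNormSq_smul, mul_comm _ (‖s‖ ^ 2), mul_comm _ (‖s‖ ^ 2)]
  exact ⟨mul_le_mul_of_nonneg_left hwb.1 (by positivity),
    mul_le_mul_of_nonneg_left hwb.2 (by positivity)⟩

open Filter Matrix Topology in
/-- Theorem 1: two-sided bounds on generalised eigenvectors from uniform
non-degeneracy and two-sided bounds on Turán determinants. -/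
theorem statement8
    (a b : ℕ → ℂ) (ha : ∀ n, a n ≠ 0)
    (N : ℕ) (hN : 1 ≤ N) (i : ℕ) (hi : i < N)
    (γ : ℂ) (hγ : ‖γ‖ = 1)
    (K : Set ℂ) (hK : IsCompact K)
    (hQ : UnifNonDeg K (fun n z v => Qgam a b N γ (n*N+i) z v))
    (hS : ∃ c₁ > (0:ℝ), ∃ c₂ > (0:ℝ), ∃ M : ℕ, 1 ≤ M ∧
      ∀ z ∈ K, ∀ u : ℕ → ℂ, IsGenEigen a b z u → ‖u 0‖^2 + ‖u 1‖^2 = 1 →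
        ∀ n, M ≤ n → c₁ ≤ ‖Sdet a b N γ z u n‖ ∧ ‖Sdet a b N γ z u n‖ ≤ c₂) :
    ∃ c : ℝ, 1 < c ∧ ∀ z ∈ K, ∀ n, 1 ≤ n → ∀ u : ℕ → ℂ, IsGenEigen a b z u →
      c⁻¹ * (‖u 0‖^2 + ‖u 1‖^2) ≤
        ‖a ((n+1)*N+i-1)‖ * (‖u (n*N+i-1)‖^2 + ‖u (n*N+i)‖^2) ∧
      ‖a ((n+1)*N+i-1)‖ * (‖u (n*N+i-1)‖^2 + ‖u (n*N+i)‖^2) ≤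
        c * (‖u 0‖^2 + ‖u 1‖^2) :=
  statement8_general a b ha N hN i γ K hK hQ hS
end

section
/- Let N be a positive integer, γ ∈ ℂ with |γ| = 1, and i ∈ {0, 1, …, N−1}. Suppose the scalar sequences (a_{nN+i−1}/a_{nN+i} : n ≥ 1), (b_{nN+i}/a_{nN+i} : n ≥ 1) and (γ/a_{nN+i} : n ≥ 1) belong to D̃₁(ℂ). Then for every compact subset K of the line γ·ℝ = {γ·x : x ∈ ℝ}, the sequence of matrix-valued maps (B_{nN+i} : n ≥ 1) belongs to D̃₁(K, GL(2, ℂ)). -/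
open Filter Matrix Topology

open ComplexConjugate

/-! On the line `z = γ x` with `x` real, `B_j(z)` has bottom row
`(-a_{j-1}/a_j, x (γ/a_j) - b_j/a_j)`. Conjugation commutes with multiplication by the real `x`,
so the entries of `B_{s(n+1)}(z) - conj B_{s(n)}(z)` are differences `y_{n+1} - conj y_n` of the
three scalar sequences, with coefficients at most `sup_K |z|`. Boundedness and summability are
inherited from them, and the operator norm of a matrix is bounded by the sum of its entries. -/

lemma EuclideanSpace.norm_le_sum_norm {𝕜 ι : Type*} [RCLike 𝕜] [Fintype ι]
    (x : EuclideanSpace 𝕜 ι) : ‖x‖ ≤ ∑ i, ‖x i‖ := by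
  conv_lhs => rw [← (EuclideanSpace.basisFun ι 𝕜).sum_repr x]
  refine (norm_sum_le _ _).trans (le_of_eq ?_)
  simp [norm_smul]

lemma Matrix.norm_toEuclideanCLM_le_sum_norm {𝕜 n : Type*} [RCLike 𝕜] [Fintype n] [DecidableEq n]
    (A : Matrix n n 𝕜) : ‖toEuclideanCLM (𝕜 := 𝕜) A‖ ≤ ∑ i, ∑ j, ‖A i j‖ := by
  refine ContinuousLinearMap.opNorm_le_bound _ (by positivity) fun v => ?_
  calc ‖toEuclideanCLM (𝕜 := 𝕜) A v‖ ≤ ∑ i, ‖(A *ᵥ v.ofLp) i‖ := EuclideanSpace.norm_le_sum_norm _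
    _ ≤ ∑ i, ∑ j, ‖A i j‖ * ‖v‖ := by
      gcongr with i
      refine (norm_sum_le _ _).trans (Finset.sum_le_sum fun j _ => ?_)
      rw [norm_mul]
      gcongr
      exact PiLp.norm_apply_le v j
    _ = (∑ i, ∑ j, ‖A i j‖) * ‖v‖ := by simp only [Finset.sum_mul]

lemma opNorm_of_zero_one_le (u v : ℂ) : opNorm !![0, 1; u, v] ≤ 1 + ‖u‖ + ‖v‖ := by
  refine (norm_toEuclideanCLM_le_sum_norm _).trans (le_of_eq ?_)
  simp [Fin.sum_univ_two, add_assoc]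

lemma opNorm_of_zero_zero_le (u v : ℂ) : opNorm !![0, 0; u, v] ≤ ‖u‖ + ‖v‖ := by
  refine (norm_toEuclideanCLM_le_sum_norm _).trans (le_of_eq ?_)
  simp [Fin.sum_univ_two]

lemma continuous_Bmat (a b : ℕ → ℂ) (j : ℕ) : Continuous (Bmat a b j) := by
  unfold Bmat
  fun_prop

lemma det_Bmat (a b : ℕ → ℂ) (j : ℕ) (z : ℂ) : (Bmat a b j z).det = a (j - 1) / a j := by
  simp [Bmat, det_fin_two_of]

lemma isUnit_Bmat {a : ℕ → ℂ} (ha : ∀ n, a n ≠ 0) (b : ℕ → ℂ) (j : ℕ) (z : ℂ) :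
    IsUnit (Bmat a b j z) := by
  rw [isUnit_iff_isUnit_det, det_Bmat]
  exact (div_ne_zero (ha _) (ha _)).isUnit

lemma Bmat_mul_ofReal (a b : ℕ → ℂ) (j : ℕ) (γ : ℂ) (x : ℝ) :
    Bmat a b j (γ * x) = !![0, 1; -(a (j - 1) / a j), x * (γ / a j) - b j / a j] := by
  rw [Bmat, sub_div, mul_comm γ, mul_div_assoc]

lemma mconj_of (p q r s : ℂ) : mconj !![p, q; r, s] = !![conj p, conj q; conj r, conj s] := by
  ext i j; fin_cases i <;> fin_cases j <;> rfl

lemma Bmat_sub_mconj_Bmat (a b : ℕ → ℂ) (j k : ℕ) (γ : ℂ) (x : ℝ) :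
    Bmat a b k (γ * x) - mconj (Bmat a b j (γ * x)) =
      !![0, 0; -(a (k - 1) / a k - conj (a (j - 1) / a j)),
        x * (γ / a k - conj (γ / a j)) - (b k / a k - conj (b j / a j))] := by
  rw [Bmat_mul_ofReal, Bmat_mul_ofReal, mconj_of]
  ext p q
  fin_cases p <;> fin_cases q <;> simp <;> ring

lemma exists_abs_le_of_subset_line {K : Set ℂ} (hK : IsCompact K) {γ : ℂ} (hγ : ‖γ‖ = 1)
    (hKline : K ⊆ {w : ℂ | ∃ x : ℝ, w = γ * x}) :
    ∃ R : ℝ, ∀ z ∈ K, ∃ x : ℝ, z = γ * x ∧ |x| ≤ R := by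
  obtain ⟨R, hR⟩ := hK.isBounded.exists_norm_le
  refine ⟨R, fun z hz => ?_⟩
  obtain ⟨x, rfl⟩ := hKline hz
  exact ⟨x, rfl, by simpa [hγ] using hR _ hz⟩

lemma norm_ofReal_mul_sub_le {x R : ℝ} (hx : |x| ≤ R) (c d : ℂ) :
    ‖(x : ℂ) * c - d‖ ≤ R * ‖c‖ + ‖d‖ := by
  refine (norm_sub_le _ _).trans ?_
  rw [norm_mul, Complex.norm_real, Real.norm_eq_abs]
  gcongr

theorem memD1K_Bmat_comp {a : ℕ → ℂ} (ha : ∀ n, a n ≠ 0) (b : ℕ → ℂ) (s : ℕ → ℕ) {γ : ℂ}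
    (hγ : ‖γ‖ = 1) (h1 : MemD1 fun n => a (s n - 1) / a (s n))
    (h2 : MemD1 fun n => b (s n) / a (s n)) (h3 : MemD1 fun n => γ / a (s n))
    {K : Set ℂ} (hK : IsCompact K) (hKline : K ⊆ {w : ℂ | ∃ x : ℝ, w = γ * x}) :
    MemD1K K fun n z => Bmat a b (s n) z := by
  obtain ⟨R, hR⟩ := exists_abs_le_of_subset_line hK hγ hKline
  obtain ⟨⟨C1, hC1⟩, hs1⟩ := h1
  obtain ⟨⟨C2, hC2⟩, hs2⟩ := h2
  obtain ⟨⟨C3, hC3⟩, hs3⟩ := h3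
  set g : ℕ → ℝ := fun n =>
    ‖a (s (n + 1) - 1) / a (s (n + 1)) - conj (a (s n - 1) / a (s n))‖ +
      (R * ‖γ / a (s (n + 1)) - conj (γ / a (s n))‖ +
        ‖b (s (n + 1)) / a (s (n + 1)) - conj (b (s n) / a (s n))‖)
  refine ⟨fun n _ => (continuous_Bmat a b _).continuousOn, fun n _ z _ => isUnit_Bmat ha b _ z,
    ⟨1 + C1 + (R * C3 + C2), fun n hn z hz => ?_⟩,
    ⟨g, (summable_nat_add_iff 1).mp (hs1.add ((hs3.mul_left R).add hs2)), fun n _ z hz => ?_⟩⟩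
  · obtain ⟨x, rfl, hx⟩ := hR z hz
    calc opNorm (Bmat a b (s n) (γ * x))
        ≤ 1 + ‖a (s n - 1) / a (s n)‖ + ‖x * (γ / a (s n)) - b (s n) / a (s n)‖ := by
          rw [Bmat_mul_ofReal, ← norm_neg (a _ / _)]
          exact opNorm_of_zero_one_le _ _
      _ ≤ 1 + C1 + (R * C3 + C2) := by
          gcongr
          · exact hC1 n hn
          · refine (norm_ofReal_mul_sub_le hx _ _).trans ?_
            have hR0 : 0 ≤ R := (abs_nonneg x).trans hx
            gcongr
            exacts [hC3 n hn, hC2 n hn]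
  · obtain ⟨x, rfl, hx⟩ := hR z hz
    dsimp only
    rw [Bmat_sub_mconj_Bmat]
    refine (opNorm_of_zero_zero_le _ _).trans ?_
    rw [norm_neg]
    exact add_le_add le_rfl (norm_ofReal_mul_sub_le hx _ _)

open Filter Matrix Topology in
theorem statement10_general
    (a b : ℕ → ℂ) (ha : ∀ n, a n ≠ 0)
    (N : ℕ) (γ : ℂ) (hγ : ‖γ‖ = 1)
    (i : ℕ)
    (h1 : MemD1 (fun n => a (n*N+i-1) / a (n*N+i)))
    (h2 : MemD1 (fun n => b (n*N+i) / a (n*N+i)))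
    (h3 : MemD1 (fun n => γ / a (n*N+i)))
    (K : Set ℂ) (hK : IsCompact K)
    (hKline : K ⊆ {w : ℂ | ∃ x : ℝ, w = γ * x}) :
    MemD1K K (fun n z => Bmat a b (n*N+i) z) :=
  memD1K_Bmat_comp ha b (fun n => n * N + i) hγ h1 h2 h3 hK hKline

open Filter Matrix Topology in
/-- Proposition 7: membership of the one-step transfer matrices in the twisted
Stolz class on compact subsets of the line γ·ℝ. -/
theorem statement10
    (a b : ℕ → ℂ) (ha : ∀ n, a n ≠ 0)
    (N : ℕ) (hN : 1 ≤ N) (γ : ℂ) (hγ : ‖γ‖ = 1)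
    (i : ℕ) (hi : i < N)
    (h1 : MemD1 (fun n => a (n*N+i-1) / a (n*N+i)))
    (h2 : MemD1 (fun n => b (n*N+i) / a (n*N+i)))
    (h3 : MemD1 (fun n => γ / a (n*N+i)))
    (K : Set ℂ) (hK : IsCompact K)
    (hKline : K ⊆ {w : ℂ | ∃ x : ℝ, w = γ * x}) :
    MemD1K K (fun n z => Bmat a b (n*N+i) z) :=
  statement10_general a b ha N γ hγ i h1 h2 h3 K hK hKline
end

section
/- Let N be a positive integer, γ ∈ ℂ with |γ| = 1, and let (α_n : n ∈ ℤ), (β_n : n ∈ ℤ) be N-periodic real sequences with α_n > 0. Suppose the complex sequences (a_n), (b_n) (with a_n ≠ 0) satisfy: a_n/|a_n| → γ; (a_{n−1}/a_n), (b_n/a_n), (γ/a_n) ∈ D̃₁^N(ℂ); |a_n| → ∞; a_{n−1}/a_n − α_{n−1}/α_n → 0; b_n/a_n − β_n/α_n → 0. Let (x_n : n ≥ 0) and (y_n : n ≥ 0) be complex sequences such that (x_n/a_n), (y_n/a_n) ∈ D̃₁^N(ℂ) and x_n/a_n → 0, y_n/a_n → 0. Define ã_n = a_n + x_n and b̃_n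 = b_n + y_n, and assume ã_n ≠ 0 for all n. Then the sequences (ã_n), (b̃_n) satisfy the same conditions with the same α, β and γ: ã_n/|ã_n| → γ; (ã_{n−1}/ã_n), (b̃_n/ã_n), (γ/ã_n) ∈ D̃₁^N(ℂ); |ã_n| → ∞; ã_{n−1}/ã_n − α_{n−1}/α_n → 0; and b̃_n/ã_n − β_n/α_n → 0. -/
open Filter Matrix Topology

/-! Writing `ãₙ = aₙ uₙ` with `uₙ = 1 + xₙ/aₙ`, the sequence `u` lies in `D̃₁^N(ℂ)`, tends to `1`
and stays away from `0`, so `u⁻¹` lies in `D̃₁^N(ℂ)` as well. Each new sequence is a product of an old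
one with `u(n-1)`, `u⁻¹` or `u`, and `D̃₁^N(ℂ)` is an algebra closed under the shift `n ↦ n - 1` and
under inverses of sequences bounded away from `0`; the limits follow because the old ratios are
bounded while the correcting factors tend to `1`. -/

namespace MemD1

lemma one : MemD1 fun _ => (1 : ℂ) :=
  ⟨⟨1, fun _ _ => by simp⟩, by simp⟩

lemma congr {u v : ℕ → ℂ} (hu : MemD1 u) (h : ∀ n, 1 ≤ n → u n = v n) : MemD1 v := by
  obtain ⟨⟨C, hC⟩, hS⟩ := hu
  refine ⟨⟨C, fun n hn => h n hn ▸ hC n hn⟩, hS.congr fun n => ?_⟩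
  rw [h (n + 2) (by omega), h (n + 1) (by omega)]

lemma add {u v : ℕ → ℂ} (hu : MemD1 u) (hv : MemD1 v) : MemD1 fun n => u n + v n := by
  obtain ⟨⟨C, hC⟩, hSu⟩ := hu
  obtain ⟨⟨D, hD⟩, hSv⟩ := hv
  refine ⟨⟨C + D, fun n hn => (norm_add_le _ _).trans (add_le_add (hC n hn) (hD n hn))⟩, ?_⟩
  refine (hSu.add hSv).of_nonneg_of_le (fun _ => norm_nonneg _) fun n => ?_
  rw [map_add, add_sub_add_comm]
  exact norm_add_le _ _

lemma mul {u v : ℕ → ℂ} (hu : MemD1 u) (hv : MemD1 v) : MemD1 fun n => u n * v n := by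
  obtain ⟨⟨C, hC⟩, hSu⟩ := hu
  obtain ⟨⟨D, hD⟩, hSv⟩ := hv
  have hC0 : 0 ≤ C := (norm_nonneg _).trans (hC 1 le_rfl)
  refine ⟨⟨C * D, fun n hn => ?_⟩, ?_⟩
  · rw [norm_mul]
    exact mul_le_mul (hC n hn) (hD n hn) (norm_nonneg _) hC0
  refine ((hSv.mul_left C).add (hSu.mul_left D)).of_nonneg_of_le (fun _ => norm_nonneg _)
    fun n => ?_
  have hsplit : u (n + 2) * v (n + 2) - (starRingEnd ℂ) (u (n + 1) * v (n + 1)) =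
      u (n + 2) * (v (n + 2) - (starRingEnd ℂ) (v (n + 1))) +
        (u (n + 2) - (starRingEnd ℂ) (u (n + 1))) * (starRingEnd ℂ) (v (n + 1)) := by
    rw [map_mul]; ring
  rw [hsplit]
  refine (norm_add_le _ _).trans (add_le_add ?_ ?_) <;> rw [norm_mul]
  · exact mul_le_mul_of_nonneg_right (hC _ (by omega)) (norm_nonneg _)
  · rw [Complex.norm_conj, mul_comm]
    exact mul_le_mul_of_nonneg_right (hD _ (by omega)) (norm_nonneg _)

lemma inv {u : ℕ → ℂ} {δ : ℝ} (hδ : 0 < δ) (hu : MemD1 u) (hlb : ∀ n, 1 ≤ n → δ ≤ ‖u n‖) :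
    MemD1 fun n => (u n)⁻¹ := by
  obtain ⟨-, hS⟩ := hu
  have hinv : ∀ n, 1 ≤ n → ‖(u n)⁻¹‖ ≤ δ⁻¹ := fun n hn => by
    rw [norm_inv]; exact inv_anti₀ hδ (hlb n hn)
  have hne : ∀ n, 1 ≤ n → u n ≠ 0 := fun n hn h0 => by
    have := hlb n hn; rw [h0, norm_zero] at this; linarith
  refine ⟨⟨δ⁻¹, hinv⟩, (hS.mul_left (δ⁻¹ * δ⁻¹)).of_nonneg_of_le (fun _ => norm_nonneg _)
    fun n => ?_⟩
  have hconj : ‖((starRingEnd ℂ) (u (n + 1)))⁻¹‖ ≤ δ⁻¹ := by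
    simpa using hinv (n + 1) (by omega)
  rw [map_inv₀, inv_sub_inv' (hne _ (by omega)) (by simpa using hne (n + 1) (by omega)),
    norm_mul, norm_mul, norm_sub_rev, mul_right_comm]
  exact mul_le_mul_of_nonneg_right
    (mul_le_mul (hinv _ (by omega)) hconj (norm_nonneg _) (inv_nonneg.2 hδ.le)) (norm_nonneg _)

lemma comp_sub_one {u : ℕ → ℂ} (hu : MemD1 u) : MemD1 fun n => u (n - 1) := by
  obtain ⟨⟨C, hC⟩, hS⟩ := hu
  refine ⟨⟨max C ‖u 0‖, fun n hn => ?_⟩, ?_⟩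
  · rcases Nat.lt_or_ge n 2 with h | h
    · obtain rfl : n = 1 := by omega
      exact le_max_right _ _
    · exact (hC (n - 1) (by omega)).trans (le_max_left _ _)
  · exact (summable_nat_add_iff (f := fun n => ‖u (n + 1) - (starRingEnd ℂ) (u n)‖) 1).mp hS

end MemD1

namespace MemD1N

variable {N : ℕ}

lemma one : MemD1N N fun _ => (1 : ℂ) := fun _ _ => MemD1.one

lemma add {u v : ℕ → ℂ} (hu : MemD1N N u) (hv : MemD1N N v) : MemD1N N fun n => u n + v n :=
  fun i hi => (hu i hi).add (hv i hi)

lemma mul {u v : ℕ → ℂ} (hu : MemD1N N u) (hv : MemD1N N v) : MemD1N N fun n => u n * v n :=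
  fun i hi => (hu i hi).mul (hv i hi)

lemma inv {u : ℕ → ℂ} {δ : ℝ} (hδ : 0 < δ) (hu : MemD1N N u)
    (hlb : ∀ n, N ≤ n → δ ≤ ‖u n‖) : MemD1N N fun n => (u n)⁻¹ :=
  fun i hi => (hu i hi).inv hδ fun n hn => hlb _ (by nlinarith)

/-- For `i ≥ 1` the `i`-th subsequence of the shift is the `(i-1)`-st one of `u`; for `i = 0` it is
the `(N-1)`-st one, itself shifted by one step. -/
lemma comp_sub_one {u : ℕ → ℂ} (hN : 1 ≤ N) (hu : MemD1N N u) :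
    MemD1N N fun n => u (n - 1) := by
  intro i hi
  rcases Nat.eq_zero_or_pos i with rfl | hi0
  · refine (hu (N - 1) (by omega)).comp_sub_one.congr fun n hn => ?_
    obtain ⟨m, rfl⟩ := Nat.exists_eq_add_of_le hn
    simp only [Nat.add_sub_cancel_left, add_mul, one_mul, add_zero]
    congr 1
    omega
  · refine (hu (i - 1) (by omega)).congr fun n _ => ?_
    simp only
    congr 1
    omega

lemma isBoundedUnder_norm {u : ℕ → ℂ} (hN : 1 ≤ N) (hu : MemD1N N u) :
    IsBoundedUnder (· ≤ ·) atTop fun n => ‖u n‖ := by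
  have hbound : ∀ i, ∃ C, i < N → ∀ m, 1 ≤ m → ‖u (m * N + i)‖ ≤ C := fun i => by
    by_cases hi : i < N
    · obtain ⟨C, hC⟩ := (hu i hi).1
      exact ⟨C, fun _ => hC⟩
    · exact ⟨0, fun h => absurd h hi⟩
  choose C hC using hbound
  refine isBoundedUnder_of_eventually_le (a := ∑ i ∈ Finset.range N, |C i|) ?_
  filter_upwards [eventually_ge_atTop N] with n hn
  have hi : n % N < N := Nat.mod_lt _ (by omega)
  calc ‖u n‖ = ‖u (n / N * N + n % N)‖ := by rw [Nat.div_add_mod']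
    _ ≤ |C (n % N)| := (hC _ hi _ ((Nat.one_le_div_iff (by omega)).2 hn)).trans (le_abs_self _)
    _ ≤ ∑ i ∈ Finset.range N, |C i| :=
      Finset.single_le_sum (fun i _ => abs_nonneg (C i)) (Finset.mem_range.2 hi)

end MemD1N

lemma exists_pos_le_norm_of_tendsto {𝕜 : Type*} [NormedDivisionRing 𝕜] {u : ℕ → 𝕜} {c : 𝕜}
    (hne : ∀ n, u n ≠ 0) (hc : c ≠ 0) (hu : Tendsto u atTop (𝓝 c)) :
    ∃ δ > 0, ∀ n, δ ≤ ‖u n‖ := by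
  obtain ⟨C, hC⟩ := isBounded_iff_forall_norm_le.1
    (Metric.isBounded_range_of_tendsto _ (hu.inv₀ hc))
  have hC' : ∀ n, ‖u n‖⁻¹ ≤ C := fun n => by simpa using hC _ ⟨n, rfl⟩
  have hCpos : 0 < C := (inv_pos.2 (norm_pos_iff.2 (hne 0))).trans_le (hC' 0)
  exact ⟨C⁻¹, inv_pos.2 hCpos, fun n => inv_le_of_inv_le₀ (norm_pos_iff.2 (hne n)) (hC' n)⟩

lemma Filter.Tendsto.mul_sub_of_isBoundedUnder {ι 𝕜 : Type*} [NormedRing 𝕜] {l : Filter ι}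
    {v w r : ι → 𝕜} (hvr : Tendsto (fun n => v n - r n) l (𝓝 0))
    (hv : IsBoundedUnder (· ≤ ·) l fun n => ‖v n‖) (hw : Tendsto w l (𝓝 1)) :
    Tendsto (fun n => v n * w n - r n) l (𝓝 0) := by
  have hw0 : Tendsto (fun n => w n - 1) l (𝓝 0) := by simpa using hw.sub_const 1
  simpa [mul_sub] using hvr.add (isBoundedUnder_le_mul_tendsto_zero hv hw0)

lemma Filter.Tendsto.mul_div_norm_mul {ι : Type*} {l : Filter ι} {z u : ι → ℂ} {γ : ℂ}
    (hz : Tendsto (fun n => z n / (‖z n‖ : ℂ)) l (𝓝 γ)) (hu : Tendsto u l (𝓝 1)) :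
    Tendsto (fun n => z n * u n / (‖z n * u n‖ : ℂ)) l (𝓝 γ) := by
  have hnorm : Tendsto (fun n => ((‖u n‖ : ℝ) : ℂ)) l (𝓝 1) := by
    have h := (Complex.continuous_ofReal.tendsto _).comp hu.norm
    rwa [norm_one, Complex.ofReal_one] at h
  simpa [norm_mul, mul_div_mul_comm] using hz.mul (hu.div hnorm one_ne_zero)

open Filter Matrix Topology in
theorem statement15_general
    (N : ℕ) (hN : 1 ≤ N) (γ : ℂ)
    (α β : ℤ → ℝ)
    (a b : ℕ → ℂ) (ha : ∀ n, a n ≠ 0)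
    (hγlim : Tendsto (fun n : ℕ => a n / (‖a n‖ : ℂ)) atTop (𝓝 γ))
    (hD1a : MemD1N N (fun n => a (n-1) / a n))
    (hD1b : MemD1N N (fun n => b n / a n))
    (hD1g : MemD1N N (fun n => γ / a n))
    (hainf : Tendsto (fun n : ℕ => ‖a n‖) atTop atTop)
    (hca : Tendsto (fun n : ℕ =>
      a (n-1) / a n - ((α ((n:ℤ)-1) / α (n:ℤ) : ℝ) : ℂ)) atTop (𝓝 0))
    (hcb : Tendsto (fun n : ℕ =>
      b n / a n - ((β (n:ℤ) / α (n:ℤ) : ℝ) : ℂ)) atTop (𝓝 0))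
    (x y : ℕ → ℂ)
    (hxD : MemD1N N (fun n => x n / a n)) (hyD : MemD1N N (fun n => y n / a n))
    (hx0 : Tendsto (fun n : ℕ => x n / a n) atTop (𝓝 0))
    (hy0 : Tendsto (fun n : ℕ => y n / a n) atTop (𝓝 0))
    (ta tb : ℕ → ℂ)
    (htaDef : ∀ n, ta n = a n + x n) (htbDef : ∀ n, tb n = b n + y n)
    (hta : ∀ n, ta n ≠ 0) :
    Tendsto (fun n : ℕ => ta n / (‖ta n‖ : ℂ)) atTop (𝓝 γ) ∧
    MemD1N N (fun n => ta (n-1) / ta n) ∧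
    MemD1N N (fun n => tb n / ta n) ∧
    MemD1N N (fun n => γ / ta n) ∧
    Tendsto (fun n : ℕ => ‖ta n‖) atTop atTop ∧
    Tendsto (fun n : ℕ =>
      ta (n-1) / ta n - ((α ((n:ℤ)-1) / α (n:ℤ) : ℝ) : ℂ)) atTop (𝓝 0) ∧
    Tendsto (fun n : ℕ =>
      tb n / ta n - ((β (n:ℤ) / α (n:ℤ) : ℝ) : ℂ)) atTop (𝓝 0) := by
  have hu : ∀ n, ta n / a n = 1 + x n / a n := fun n => by rw [htaDef, add_div, div_self (ha n)]
  have hu1 : Tendsto (fun n => ta n / a n) atTop (𝓝 1) := by simpa [hu] using hx0.const_add 1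
  have huD : MemD1N N fun n => ta n / a n := by simpa only [hu] using MemD1N.one.add hxD
  obtain ⟨δ, hδ, hlb⟩ :=
    exists_pos_le_norm_of_tendsto (fun n => div_ne_zero (hta n) (ha n)) one_ne_zero hu1
  have huinvD : MemD1N N fun n => (ta n / a n)⁻¹ := huD.inv hδ fun n _ => hlb n
  have hta_eq : ∀ n, ta n = a n * (ta n / a n) := fun n => (mul_div_cancel₀ _ (ha n)).symm
  have hdiv : ∀ (p : ℂ) n, p / ta n = p / a n * (ta n / a n)⁻¹ := fun p n => by
    rw [inv_div, div_mul_div_cancel₀ (ha n)]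
  have hshift : ∀ n, ta (n - 1) / ta n =
      a (n - 1) / a n * (ta (n - 1) / a (n - 1) * (ta n / a n)⁻¹) := fun n => by
    rw [hdiv, ← mul_assoc, mul_comm (a (n - 1) / a n), div_mul_div_cancel₀ (ha _)]
  have htbD : MemD1N N fun n => tb n / a n := by simpa only [htbDef, add_div] using hD1b.add hyD
  have htb_lim : Tendsto (fun n => tb n / a n - ((β n / α n : ℝ) : ℂ)) atTop (𝓝 0) := by
    simpa [htbDef, add_div, add_sub_right_comm] using hcb.add hy0
  refine ⟨?_, ?_, ?_, ?_, ?_, ?_, ?_⟩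
  · exact (hγlim.mul_div_norm_mul hu1).congr fun n => by rw [← hta_eq]
  · simpa only [hshift] using hD1a.mul ((huD.comp_sub_one hN).mul huinvD)
  · simpa only [hdiv] using htbD.mul huinvD
  · simpa only [hdiv] using hD1g.mul huinvD
  · exact (hainf.atTop_mul_pos one_pos (by simpa only [norm_one] using hu1.norm)).congr fun n => by
      rw [← norm_mul, ← hta_eq]
  · have hw : Tendsto (fun n => ta (n - 1) / a (n - 1) * (ta n / a n)⁻¹) atTop (𝓝 1) := by
      simpa using (hu1.comp (tendsto_sub_atTop_nat 1)).mul (hu1.inv₀ one_ne_zero)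
    simpa only [hshift] using hca.mul_sub_of_isBoundedUnder (hD1a.isBoundedUnder_norm hN) hw
  · simpa only [hdiv] using
      htb_lim.mul_sub_of_isBoundedUnder (htbD.isBoundedUnder_norm hN)
      (by simpa using hu1.inv₀ one_ne_zero)

open Filter Matrix Topology in
/-- Proposition 8: additive perturbations preserve the hypotheses of Corollary 3. -/
theorem statement15
    (N : ℕ) (hN : 1 ≤ N) (γ : ℂ) (hγ : ‖γ‖ = 1)
    (α β : ℤ → ℝ) (hαper : ∀ n, α (n+N) = α n) (hβper : ∀ n, β (n+N) = β n)
    (hαpos : ∀ n, 0 < α n)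
    (a b : ℕ → ℂ) (ha : ∀ n, a n ≠ 0)
    (hγlim : Tendsto (fun n : ℕ => a n / (‖a n‖ : ℂ)) atTop (𝓝 γ))
    (hD1a : MemD1N N (fun n => a (n-1) / a n))
    (hD1b : MemD1N N (fun n => b n / a n))
    (hD1g : MemD1N N (fun n => γ / a n))
    (hainf : Tendsto (fun n : ℕ => ‖a n‖) atTop atTop)
    (hca : Tendsto (fun n : ℕ =>
      a (n-1) / a n - ((α ((n:ℤ)-1) / α (n:ℤ) : ℝ) : ℂ)) atTop (𝓝 0))
    (hcb : Tendsto (fun n : ℕ =>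
      b n / a n - ((β (n:ℤ) / α (n:ℤ) : ℝ) : ℂ)) atTop (𝓝 0))
    (x y : ℕ → ℂ)
    (hxD : MemD1N N (fun n => x n / a n)) (hyD : MemD1N N (fun n => y n / a n))
    (hx0 : Tendsto (fun n : ℕ => x n / a n) atTop (𝓝 0))
    (hy0 : Tendsto (fun n : ℕ => y n / a n) atTop (𝓝 0))
    (ta tb : ℕ → ℂ)
    (htaDef : ∀ n, ta n = a n + x n) (htbDef : ∀ n, tb n = b n + y n)
    (hta : ∀ n, ta n ≠ 0) :
    Tendsto (fun n : ℕ => ta n / (‖ta n‖ : ℂ)) atTop (𝓝 γ) ∧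
    MemD1N N (fun n => ta (n-1) / ta n) ∧
    MemD1N N (fun n => tb n / ta n) ∧
    MemD1N N (fun n => γ / ta n) ∧
    Tendsto (fun n : ℕ => ‖ta n‖) atTop atTop ∧
    Tendsto (fun n : ℕ =>
      ta (n-1) / ta n - ((α ((n:ℤ)-1) / α (n:ℤ) : ℝ) : ℂ)) atTop (𝓝 0) ∧
    Tendsto (fun n : ℕ =>
      tb n / ta n - ((β (n:ℤ) / α (n:ℤ) : ℝ) : ℂ)) atTop (𝓝 0) :=
  statement15_general N hN γ α β a b ha hγlim hD1a hD1b hD1g hainf hca hcb x y hxD hyD hx0 hy0 ta tb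
    htaDef htbDef hta
end
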